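/- arXiv:2211.08869 — 8 statements merged into one kernel-verified Lean document; each statement's English description precedes it below -/
import Mathlib

section
/- Let G be a group and let W, X, Y be three pairwise distinct proper subgroups of G such that X and W ∩ X are normal in G, X and Y are maximal subgroups of G, and W ∩ X is not contained in Y. Then X ∩ Y is not contained in W. -/
open Subgroup

namespace NC

variable {G : Type*} [Group G]

/-- The centre of a subgroup `H`, realised as a subgroup of the ambient group `G`. -/
def centerOf (H : Subgroup G) : Subgroup G := H ⊓ Subgroup.centralizer (H : Set G)

/-- `H` is a maximal subgroup of `K` (both subgroups of the ambient group `G`). -/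
def IsMaximalIn (H K : Subgroup G) : Prop :=
  H < K ∧ ∀ T : Subgroup G, H < T → T ≤ K → T = K

/-- The non-commuting, non-generating graph of `G`: vertices `x, y` are adjacent
iff they do not commute and do not generate `G`.  (Central elements are isolated
vertices here; the paper simply removes them from the vertex set.) -/
def ncGraph (G : Type*) [Group G] : SimpleGraph G where
  Adj x y := x * y ≠ y * x ∧ Subgroup.closure {x, y} ≠ ⊤
  symm := by
    constructor
    intro x y h
    exact ⟨fun e => h.1 e.symm, by rw [Set.pair_comm]; exact h.2⟩
  loopless := by
    constructor
    intro x h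
    exact h.1 rfl

/-- The conjugate `g H g⁻¹` of a subgroup `H` by an element `g`. -/
def conjSub (g : G) (H : Subgroup G) : Subgroup G := H.map (MulAut.conj g).toMonoidHom

/-- "The quotient of `G` by the subgroup `H` is cyclic": every coset of `H` is a
power of a fixed coset.  For `H` normal this says exactly that `G/H` is cyclic. -/
def QuotCyclic (H : Subgroup G) : Prop := ∃ g : G, ∀ x : G, ∃ n : ℤ, x⁻¹ * g ^ n ∈ H

/-- `P` is a Sylow `p`-subgroup of `G`. -/
def IsSylowIn (p : ℕ) (P : Subgroup G) : Prop :=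
  IsPGroup p P ∧ ∀ R : Subgroup G, IsPGroup p R → P ≤ R → R = P

/-- The Frattini subgroup of a subgroup `P` (the intersection of the maximal
subgroups of `P`), realised as a subgroup of the ambient group. -/
def phiIn (P : Subgroup G) : Subgroup G := P ⊓ sInf {W : Subgroup G | IsMaximalIn W P}

/-- `G` has exactly two conjugacy classes of maximal subgroups. -/
def TwoMaxClasses (G : Type*) [Group G] : Prop :=
  ∃ K L : Subgroup G, IsCoatom K ∧ IsCoatom L ∧ (∀ g : G, conjSub g K ≠ L) ∧
    ∀ T : Subgroup G, IsCoatom T → (∃ g : G, T = conjSub g K) ∨ (∃ g : G, T = conjSub g L)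

/-- The induced subgraph of the non-commuting, non-generating graph on the
actual vertex set `G \ Z(G)`. -/
def ncSubgraph (G : Type*) [Group G] := (ncGraph G).induce {x : G | x ∉ Subgroup.center G}

theorem sup_inf_eq_sup_inf_of_normal {N H K : Subgroup G} [N.Normal] (hNK : N ≤ K) :
    (N ⊔ H) ⊓ K = N ⊔ (H ⊓ K) :=
  SetLike.coe_injective <| by
    rw [coe_inf, normal_mul, normal_mul, mul_inf_assoc N H K hNK]

theorem statement_2_general {W X Y : Subgroup G}
    (hWprop : W ≠ ⊤) (hWX : W ≠ X)
    (hWXn : (W ⊓ X).Normal)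
    (hX : IsCoatom X) (hY : IsCoatom Y)
    (h : ¬ W ⊓ X ≤ Y) : ¬ X ⊓ Y ≤ W := by
  intro hle
  have hsup : W ⊓ X ⊔ Y = ⊤ := by
    rw [sup_comm, ← codisjoint_iff]
    exact hY.not_le_iff_codisjoint.mp h
  have hXW : X ≤ W :=
    calc X = (W ⊓ X ⊔ Y) ⊓ X := by rw [hsup, top_inf_eq]
      _ = W ⊓ X ⊔ Y ⊓ X := sup_inf_eq_sup_inf_of_normal inf_le_right
      _ ≤ W := sup_le inf_le_left (inf_comm Y X ▸ hle)
  exact hWX ((hX.le_iff_eq hWprop).mp hXW)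

/-- Lemma 2.4 / `lem:threemaxint`. -/
theorem statement_2 {W X Y : Subgroup G}
    (hWprop : W ≠ ⊤) (hWX : W ≠ X) (hWY : W ≠ Y) (hXY : X ≠ Y)
    (hXn : X.Normal) (hWXn : (W ⊓ X).Normal)
    (hX : IsCoatom X) (hY : IsCoatom Y)
    (h : ¬ W ⊓ X ≤ Y) : ¬ X ⊓ Y ≤ W :=
  statement_2_general hWprop hWX hWXn hX hY h

end NC
end

section
/- Let G be a group, N a normal subgroup of G such that the quotient G/N is not cyclic, and let n ∈ N \ Z(G) and g ∈ G \ Z(G) with n ≠ g. Then n and g are adjacent in the non-commuting, non-generating graph nc(G) if and only if [n,g] ≠ 1. -/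
/-
A generating pair `{n, g}` of `G` with `n ∈ N` maps onto the generating set `{1, gN}` of `G/N`,
so `G/N` would be cyclic, generated by `gN`.
-/

open Subgroup
open scoped commutatorElement

namespace NC

variable {G : Type*} [Group G]

theorem _root_.MonoidHom.isCyclic_of_closure_pair_eq_top {H : Type*} [Group H] {f : G →* H}
    (hf : Function.Surjective f) {n g : G} (hn : f n = 1) (hgen : closure {n, g} = ⊤) :
    IsCyclic H := by
  refine isCyclic_iff_exists_zpowers_eq_top.mpr ⟨f g, ?_⟩
  calc zpowers (f g) = closure (f '' {n, g}) := by
        rw [Set.image_pair, hn, closure_insert_one, zpowers_eq_closure]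
    _ = ⊤ := by rw [← MonoidHom.map_closure, hgen, map_top_of_surjective f hf]

theorem closure_pair_ne_top_of_not_isCyclic_quotient {N : Subgroup G} [N.Normal]
    (hcyc : ¬ IsCyclic (G ⧸ N)) {n : G} (hn : n ∈ N) (g : G) : closure {n, g} ≠ ⊤ :=
  fun hgen => hcyc <| MonoidHom.isCyclic_of_closure_pair_eq_top (QuotientGroup.mk'_surjective N)
    ((QuotientGroup.eq_one_iff n).mpr hn) hgen

theorem statement_4_general {N : Subgroup G} [hN : N.Normal]
    (hcyc : ¬ IsCyclic (G ⧸ N)) {n g : G} (hn : n ∈ N) :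
    (ncGraph G).Adj n g ↔ ⁅n, g⁆ ≠ 1 := by
  rw [Ne, commutatorElement_eq_one_iff_mul_comm]
  exact ⟨And.left, fun hcomm => ⟨hcomm, closure_pair_ne_top_of_not_isCyclic_quotient hcyc hn g⟩⟩

/-- Lemma 2.8 / `lem:noncycedge`. -/
theorem statement_4 {N : Subgroup G} [hN : N.Normal]
    (hcyc : ¬ IsCyclic (G ⧸ N)) {n g : G} (hn : n ∈ N)
    (hnZ : n ∉ Subgroup.center G) (hgZ : g ∉ Subgroup.center G) (hng : n ≠ g) :
    (ncGraph G).Adj n g ↔ ⁅n, g⁆ ≠ 1 :=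
  statement_4_general (hN := hN) hcyc hn

end NC
end

section
/- Let G be a 2-generated group and let L and M be non-abelian maximal subgroups of G with L normal in G. Let x ∈ L \ Z(L) and y ∈ M \ Z(M), and suppose that C_L(x) is normal in G or M is normal in G. Then the distance d(x,y) between x and y in the non-commuting, non-generating graph nc(G) is at most 3. Moreover, d(x,y) = 3 if and only if either: (i) x ∈ Z(M), y ∉ L, and M is the only maximal subgroup of G that contains y and does not centralise y; or (ii) y ∈ Z(L), x ∉ M, and L is the only maximal subgroup of G that contains x and does not centralise x. -/
/-!
Inside a proper subgroup `K`, two elements outside `Z(K)` have a common neighbour in `K`, because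
`K` is not the union of their two centralisers; the same union argument in `L ∩ M` handles
`x ∉ M`, `y ∉ L`. The remaining case is that one vertex is central in the other's maximal
subgroup, say `x ∈ Z(M)`. Then `C_G(x) = M` and `x` is adjacent to every `w ∉ M`: `⟨x, w⟩` lies in
`Z(M)⟨w⟩` or in `C_L(x)⟨w⟩`, and either being `G` would make a quotient cyclic, forcing `M` to
be abelian, resp. normal. This gives a path `x – w – c – y` with `w ∈ L \ M` and `c ∈ L ∩ M`.
Any common neighbour of `x` and `y` lies outside `M` and generates with `y` a subgroup inside a
maximal subgroup that does not centralise `y`, so a shorter path exists exactly when such a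
maximal subgroup other than `M` exists.
-/

open Subgroup

namespace NC

variable {G : Type*} [Group G]

open scoped Pointwise

lemma mem_centerOf_iff {H : Subgroup G} {x : G} :
    x ∈ centerOf H ↔ x ∈ H ∧ H ≤ centralizer {x} := by
  rw [centerOf, mem_inf, SetLike.le_def]
  simp only [mem_centralizer_singleton_iff]
  rfl

lemma not_le_centralizer_of_notMem_centerOf {H : Subgroup G} {x : G} (hx : x ∈ H)
    (hxZ : x ∉ centerOf H) : ¬ H ≤ centralizer {x} :=
  fun h => hxZ (mem_centerOf_iff.mpr ⟨hx, h⟩)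

lemma notMem_center_of_notMem_centerOf {H : Subgroup G} {x : G} (hx : x ∈ H)
    (hxZ : x ∉ centerOf H) : x ∉ center G :=
  fun h => hxZ ⟨hx, fun g _ => mem_center_iff.mp h g⟩

lemma exists_mem_not_commute_iff {K : Subgroup G} {v : G} :
    (∃ k ∈ K, k * v ≠ v * k) ↔ ¬ K ≤ centralizer {v} := by
  simp [SetLike.le_def, mem_centralizer_singleton_iff]

lemma centralizer_singleton_eq_of_mem_centerOf {B : Subgroup G} (hB : IsCoatom B) {u : G}
    (hu : u ∈ centerOf B) (huZ : u ∉ center G) : centralizer {u} = B :=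
  (hB.le_iff.mp (mem_centerOf_iff.mp hu).2).resolve_left fun h =>
    huZ (centralizer_eq_top_iff_subset.mp h rfl)

lemma centerOf_normal {L : Subgroup G} [hL : L.Normal] : (centerOf L).Normal := by
  refine ⟨fun z ⟨hzL, hzC⟩ g => ⟨hL.conj_mem z hzL g, mem_centralizer_iff.mpr fun l hl => ?_⟩⟩
  have hc := mem_centralizer_iff.mp hzC (g⁻¹ * l * g) (by simpa using hL.conj_mem l hl g⁻¹)
  calc l * (g * z * g⁻¹) = g * (g⁻¹ * l * g * z) * g⁻¹ := by group
    _ = g * (z * (g⁻¹ * l * g)) * g⁻¹ := by rw [hc]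
    _ = g * z * g⁻¹ * l := by group

lemma exists_mem_notMem_of_not_le_of_not_le {H A B : Subgroup G} (hA : ¬ H ≤ A)
    (hB : ¬ H ≤ B) : ∃ g ∈ H, g ∉ A ∧ g ∉ B := by
  obtain ⟨a, haH, haA⟩ := SetLike.not_le_iff_exists.mp hA
  obtain ⟨b, hbH, hbB⟩ := SetLike.not_le_iff_exists.mp hB
  by_cases haB : a ∈ B
  · by_cases hbA : b ∈ A
    · refine ⟨a * b, H.mul_mem haH hbH, fun h => haA ?_, fun h => hbB ?_⟩
      · simpa using A.mul_mem h (A.inv_mem hbA)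
      · simpa using B.mul_mem (B.inv_mem haB) h
    · exact ⟨b, hbH, hbA, hbB⟩
  · exact ⟨a, haH, haA, haB⟩

lemma isCoatomic_of_closure_pair_eq_top {a b : G} (h : closure {a, b} = ⊤) :
    IsCoatomic (Subgroup G) := by
  refine CompleteLattice.coatomic_of_top_compact ?_
  rw [CompleteLattice.isCompactElement_iff_le_of_directed_sSup_le]
  intro s hs hdir htop
  have hmem : ∀ g, ∃ K ∈ s, g ∈ K := fun g =>
    (mem_sSup_of_directedOn hs hdir).mp (htop (mem_top g))
  obtain ⟨K₁, hK₁, ha⟩ := hmem a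
  obtain ⟨K₂, hK₂, hb⟩ := hmem b
  obtain ⟨K, hK, h₁, h₂⟩ := hdir K₁ hK₁ K₂ hK₂
  exact ⟨K, hK, h ▸ (closure_le K).mpr (Set.pair_subset (h₁ ha) (h₂ hb))⟩

lemma isCyclic_quotient_of_sup_zpowers_eq_top {N : Subgroup G} [N.Normal] {w : G}
    (h : N ⊔ zpowers w = ⊤) : IsCyclic (G ⧸ N) := by
  have := congrArg (map (QuotientGroup.mk' N)) h
  rw [Subgroup.map_sup, QuotientGroup.map_mk'_self, bot_sup_eq, MonoidHom.map_zpowers,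
    map_top_of_surjective _ (QuotientGroup.mk'_surjective N)] at this
  exact isCyclic_iff_exists_zpowers_eq_top.mpr ⟨_, this⟩

lemma normal_of_le_of_sup_zpowers_eq_top {N M : Subgroup G} [N.Normal] {w : G} (hNM : N ≤ M)
    (h : N ⊔ zpowers w = ⊤) : M.Normal := by
  have := isCyclic_quotient_of_sup_zpowers_eq_top h
  refine ⟨fun m hm g => ?_⟩
  have hq : ((g * m * g⁻¹ : G) : G ⧸ N) = m := by
    rw [QuotientGroup.mk_mul, QuotientGroup.mk_mul, IsMulCommutative.is_comm.comm (g : G ⧸ N),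
      QuotientGroup.mk_inv, mul_inv_cancel_right]
  have hc : (g * m * g⁻¹)⁻¹ * m ∈ M := hNM (QuotientGroup.eq.mp hq)
  simpa using M.mul_mem hm (M.inv_mem hc)

/-- Otherwise `L / Z(L)` embeds in the cyclic group `G / Z(L)`. -/
lemma centerOf_sup_zpowers_ne_top {L : Subgroup G} [L.Normal]
    (hLna : ∃ a ∈ L, ∃ b ∈ L, a * b ≠ b * a) (w : G) : centerOf L ⊔ zpowers w ≠ ⊤ := by
  intro h
  have := centerOf_normal (L := L)
  have := isCyclic_quotient_of_sup_zpowers_eq_top h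
  obtain ⟨a, ha, b, hb, hab⟩ := hLna
  let f : L →* G ⧸ centerOf L := (QuotientGroup.mk' _).comp L.subtype
  have hf : f.ker ≤ center L := fun l hl => mem_center_iff.mpr fun k => Subtype.ext <|
    ((QuotientGroup.eq_one_iff (l : G)).mp hl).2 k k.2
  exact hab (congrArg Subtype.val
    ((f.isMulCommutative_of_isCyclic_of_ker_le_center hf).is_comm.comm ⟨a, ha⟩ ⟨b, hb⟩))

lemma le_centralizer_of_inf_le {N K : Subgroup G} [N.Normal] (hN : IsCoatom N) {y : G}
    (hyK : y ∈ K) (hyN : y ∉ N) (h : N ⊓ K ≤ centralizer {y}) : K ≤ centralizer {y} := by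
  have htop : N ⊔ zpowers y = ⊤ := hN.2 _ (left_lt_sup.mpr (zpowers_le.not.mpr hyN))
  intro g hg
  obtain ⟨n, hn, c, hc, rfl⟩ : g ∈ (N : Set G) * (zpowers y : Set G) := by
    rw [← normal_mul, htop]; trivial
  have hcK : c ∈ K := zpowers_le.mpr hyK hc
  have hnK : n ∈ K := by simpa using K.mul_mem hg (K.inv_mem hcK)
  exact mul_mem (h ⟨hn, hnK⟩) (zpowers_le.mpr (mem_centralizer_singleton_iff.mpr rfl) hc)

lemma not_inf_le_centralizer_left {L M : Subgroup G} (hM : IsCoatom M) {x : G} (hxL : x ∈ L)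
    (hxZ : x ∉ centerOf L) (hxM : x ∉ M)
    (hcase : (L ⊓ centralizer {x}).Normal ∨ M.Normal) : ¬ L ⊓ M ≤ centralizer {x} := by
  refine fun hle => not_le_centralizer_of_notMem_centerOf hxL hxZ ?_
  rcases hcase with hD | hMn
  · have hxD : x ∈ L ⊓ centralizer {x} := ⟨hxL, mem_centralizer_singleton_iff.mpr rfl⟩
    have htop : (L ⊓ centralizer {x}) ⊔ M = ⊤ :=
      hM.2 _ (right_lt_sup.mpr fun h => hxM (h hxD))
    intro l hl
    obtain ⟨d, hd, m, hm, rfl⟩ :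
        l ∈ ((L ⊓ centralizer {x} : Subgroup G) : Set G) * (M : Set G) := by
      rw [← normal_mul, htop]; trivial
    have hmL : m ∈ L := by simpa using L.mul_mem (L.inv_mem hd.1) hl
    exact mul_mem hd.2 (hle ⟨hmL, hm⟩)
  · exact le_centralizer_of_inf_le hM hxL hxM (by rwa [inf_comm])

lemma not_inf_le_centralizer_right {L M : Subgroup G} [L.Normal] (hL : IsCoatom L) {y : G}
    (hyM : y ∈ M) (hyZ : y ∉ centerOf M) (hyL : y ∉ L) : ¬ L ⊓ M ≤ centralizer {y} :=
  fun hle => not_le_centralizer_of_notMem_centerOf hyM hyZ (le_centralizer_of_inf_le hL hyM hyL hle)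

lemma adj_of_mem {K : Subgroup G} (hK : K ≠ ⊤) {u v : G} (hu : u ∈ K) (hv : v ∈ K)
    (huv : u * v ≠ v * u) : (ncGraph G).Adj u v :=
  ⟨huv, fun h => hK (top_le_iff.mp (h ▸ (closure_le K).mpr (Set.pair_subset hu hv)))⟩

lemma exists_adj_adj_of_not_inf_le {A B : Subgroup G} (hA : A ≠ ⊤) (hB : B ≠ ⊤) {u v : G}
    (hu : u ∈ A) (hv : v ∈ B) (hAu : ¬ A ⊓ B ≤ centralizer {u})
    (hBv : ¬ A ⊓ B ≤ centralizer {v}) :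
    ∃ w, (ncGraph G).Adj u w ∧ (ncGraph G).Adj w v := by
  obtain ⟨w, hw, hwu, hwv⟩ := exists_mem_notMem_of_not_le_of_not_le hAu hBv
  rw [mem_centralizer_singleton_iff] at hwu hwv
  exact ⟨w, adj_of_mem hA hu hw.1 (Ne.symm hwu), adj_of_mem hB hw.2 hv hwv⟩

lemma exists_adj_adj_of_notMem_centerOf {K : Subgroup G} (hK : K ≠ ⊤) {u v : G} (hu : u ∈ K)
    (hv : v ∈ K) (huZ : u ∉ centerOf K) (hvZ : v ∉ centerOf K) :
    ∃ w, (ncGraph G).Adj u w ∧ (ncGraph G).Adj w v := by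
  refine exists_adj_adj_of_not_inf_le hK hK hu hv ?_ ?_ <;> rw [inf_idem]
  exacts [not_le_centralizer_of_notMem_centerOf hu huZ,
    not_le_centralizer_of_notMem_centerOf hv hvZ]

lemma adj_of_mem_centerOf {B N : Subgroup G} (hB : IsCoatom B) {u w : G} (hu : u ∈ centerOf B)
    (huZ : u ∉ center G) (huN : u ∈ N) (hN : N ⊔ zpowers w ≠ ⊤) (hw : w ∉ B) :
    (ncGraph G).Adj u w := by
  refine adj_of_mem hN (mem_sup_left huN) (mem_sup_right (mem_zpowers w)) fun h => hw ?_
  rw [← centralizer_singleton_eq_of_mem_centerOf hB hu huZ, mem_centralizer_singleton_iff]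
  exact h.symm

lemma forall_adj_of_mem_centerOf_of_normal {B : Subgroup G} [B.Normal] (hB : IsCoatom B)
    (hBna : ∃ a ∈ B, ∃ b ∈ B, a * b ≠ b * a) {u : G} (hu : u ∈ centerOf B)
    (huZ : u ∉ center G) : ∀ w ∉ B, (ncGraph G).Adj u w :=
  fun w => adj_of_mem_centerOf hB hu huZ hu (centerOf_sup_zpowers_ne_top hBna w)

/-- If `M` is not normal then `C_L(x)` is normal, and `C_L(x)⟨w⟩ ≠ G` since otherwise `G / C_L(x)`
is cyclic and `M = C_G(x) ≥ C_L(x)` would be normal. -/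
lemma forall_adj_of_mem_centerOf {L M : Subgroup G} (hM : IsCoatom M)
    (hMna : ∃ a ∈ M, ∃ b ∈ M, a * b ≠ b * a) {x : G} (hx : x ∈ centerOf M) (hxL : x ∈ L)
    (hxZ : x ∉ center G) (hcase : (L ⊓ centralizer {x}).Normal ∨ M.Normal) :
    ∀ w ∉ M, (ncGraph G).Adj x w := by
  by_cases hMn : M.Normal
  · exact forall_adj_of_mem_centerOf_of_normal hM hMna hx hxZ
  have := hcase.resolve_right hMn
  intro w hw
  refine adj_of_mem_centerOf (N := L ⊓ centralizer {x}) hM hx hxZ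
    ⟨hxL, mem_centralizer_singleton_iff.mpr rfl⟩
    (fun h => hMn (normal_of_le_of_sup_zpowers_eq_top ?_ h)) hw
  rw [← centralizer_singleton_eq_of_mem_centerOf hM hx hxZ]
  exact inf_le_right

lemma exists_walk_length_eq_three {A B : Subgroup G} (hA : IsCoatom A) (hB : IsCoatom B)
    {u v : G} (huB : u ∈ centerOf B) (huA : u ∈ A) (huZ : u ∉ centerOf A)
    (hu : ∀ w ∉ B, (ncGraph G).Adj u w) (hv : v ∈ B) (hABv : ¬ A ⊓ B ≤ centralizer {v}) :
    ∃ p : (ncGraph G).Walk u v, p.length = 3 := by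
  have hABA : ¬ A ⊓ B ≤ centralizer (A : Set G) := fun h => huZ ⟨huA, h ⟨huA, huB.1⟩⟩
  obtain ⟨c, hc, hcv, hcA⟩ := exists_mem_notMem_of_not_le_of_not_le hABv hABA
  have hAc : ¬ A ≤ centralizer {c} := fun h =>
    hcA (mem_centralizer_iff.mpr fun a ha => mem_centralizer_singleton_iff.mp (h ha))
  have hAB : ¬ A ≤ B := fun h => huZ (((hA.le_iff.mp h).resolve_left hB.1) ▸ huB)
  obtain ⟨w, hwA, hwB, hwc⟩ := exists_mem_notMem_of_not_le_of_not_le hAB hAc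
  rw [mem_centralizer_singleton_iff] at hcv hwc
  exact ⟨.cons (hu w hwB) (.cons (adj_of_mem hA.1 hwA hc.1 hwc)
    (.cons (adj_of_mem hB.1 hc.2 hv hcv) .nil)), rfl⟩

def IsUniqueNoncentralizingCoatom (B : Subgroup G) (v : G) : Prop :=
  ∀ K : Subgroup G, IsCoatom K → v ∈ K → (∃ k ∈ K, k * v ≠ v * k) → K = B

lemma exists_adj_adj_of_not_isUniqueNoncentralizingCoatom {B : Subgroup G} (hB : IsCoatom B)
    {u v : G} (hu : ∀ w ∉ B, (ncGraph G).Adj u w) (hv : ¬ IsUniqueNoncentralizingCoatom B v) :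
    ∃ w, (ncGraph G).Adj u w ∧ (ncGraph G).Adj w v := by
  simp only [IsUniqueNoncentralizingCoatom] at hv
  push Not at hv
  obtain ⟨K, hK, hvK, hKv, hKB⟩ := hv
  have hKB' : ¬ K ≤ B := fun h => hKB ((hK.le_iff.mp h).resolve_left hB.1).symm
  obtain ⟨w, hwK, hwB, hwv⟩ :=
    exists_mem_notMem_of_not_le_of_not_le hKB' (exists_mem_not_commute_iff.mp hKv)
  exact ⟨w, hu w hwB, adj_of_mem hK.1 hwK hvK fun h => hwv (mem_centralizer_singleton_iff.mpr h)⟩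

/-- A common neighbour `w` of `u` and `v` lies, together with `v`, in a maximal subgroup not
centralising `v`; that must be `B`, which centralises `u`. -/
lemma three_le_dist (h2gen : ∃ a b : G, closure {a, b} = ⊤) {B : Subgroup G} {u v : G}
    (hu : u ∈ centerOf B) (hv : v ∈ B) (hvZ : v ∉ centerOf B)
    (huniq : IsUniqueNoncentralizingCoatom B v) (hr : (ncGraph G).Reachable u v) :
    3 ≤ (ncGraph G).dist u v := by
  obtain ⟨a, b, hab⟩ := h2gen
  have := isCoatomic_of_closure_pair_eq_top hab
  have hcomm : ∀ w ∈ B, w * u = u * w := fun w hw =>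
    mem_centralizer_singleton_iff.mp ((mem_centerOf_iff.mp hu).2 hw)
  have hcn : (ncGraph G).commonNeighbors u v = ∅ := by
    refine Set.eq_empty_iff_forall_notMem.mpr fun w hw => ?_
    obtain ⟨hwu, hwv⟩ := (ncGraph G).mem_commonNeighbors.mp hw
    obtain ⟨K, hK, hvwK⟩ := (eq_top_or_exists_le_coatom _).resolve_left hwv.2
    have hvK : v ∈ K := hvwK (subset_closure (by simp))
    have hwK : w ∈ K := hvwK (subset_closure (by simp))
    have hKB := huniq K hK hvK ⟨w, hwK, fun h => hwv.1 h.symm⟩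
    exact hwu.1 (hcomm w (hKB ▸ hwK)).symm
  have h2 : 2 < (ncGraph G).edist u v := SimpleGraph.two_lt_edist_iff.mpr
    ⟨fun h => hvZ (h ▸ hu), fun h => h.1 (hcomm v hv).symm, hcn⟩
  rw [← hr.coe_dist_eq_edist] at h2
  exact_mod_cast h2

lemma reachable_and_dist_eq_three (h2gen : ∃ a b : G, closure {a, b} = ⊤) {A B : Subgroup G}
    (hA : IsCoatom A) (hB : IsCoatom B) {u v : G} (huB : u ∈ centerOf B) (huA : u ∈ A)
    (huZ : u ∉ centerOf A) (hu : ∀ w ∉ B, (ncGraph G).Adj u w) (hv : v ∈ B)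
    (hvZ : v ∉ centerOf B) (hABv : ¬ A ⊓ B ≤ centralizer {v})
    (huniq : IsUniqueNoncentralizingCoatom B v) :
    (ncGraph G).Reachable u v ∧ (ncGraph G).dist u v = 3 := by
  obtain ⟨p, hp⟩ := exists_walk_length_eq_three hA hB huB huA huZ hu hv hABv
  exact ⟨p.reachable, le_antisymm (hp ▸ SimpleGraph.dist_le p)
    (three_le_dist h2gen huB hv hvZ huniq p.reachable)⟩

lemma exists_adj_adj {L M : Subgroup G} [L.Normal] (hL : IsCoatom L) (hM : IsCoatom M)
    (hLna : ∃ a ∈ L, ∃ b ∈ L, a * b ≠ b * a) (hMna : ∃ a ∈ M, ∃ b ∈ M, a * b ≠ b * a)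
    {x y : G} (hxL : x ∈ L) (hxZ : x ∉ centerOf L) (hyM : y ∈ M) (hyZ : y ∉ centerOf M)
    (hcase : (L ⊓ centralizer {x}).Normal ∨ M.Normal)
    (h₁ : x ∈ centerOf M → y ∉ L → ¬ IsUniqueNoncentralizingCoatom M y)
    (h₂ : y ∈ centerOf L → x ∉ M → ¬ IsUniqueNoncentralizingCoatom L x) :
    ∃ w, (ncGraph G).Adj x w ∧ (ncGraph G).Adj w y := by
  have hxG := notMem_center_of_notMem_centerOf hxL hxZ
  have hyG := notMem_center_of_notMem_centerOf hyM hyZ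
  by_cases hx : x ∈ M ∧ x ∉ centerOf M
  · exact exists_adj_adj_of_notMem_centerOf hM.1 hx.1 hyM hx.2 hyZ
  by_cases hy : y ∈ L ∧ y ∉ centerOf L
  · exact exists_adj_adj_of_notMem_centerOf hL.1 hxL hy.1 hxZ hy.2
  push Not at hx hy
  by_cases hxM : x ∈ M <;> by_cases hyL : y ∈ L
  · obtain ⟨w, -, hwL, hwM⟩ := exists_mem_notMem_of_not_le_of_not_le (H := ⊤)
      (top_le_iff.not.mpr hL.1) (top_le_iff.not.mpr hM.1)
    exact ⟨w, forall_adj_of_mem_centerOf hM hMna (hx hxM) hxL hxG hcase w hwM,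
      (forall_adj_of_mem_centerOf_of_normal hL hLna (hy hyL) hyG w hwL).symm⟩
  · exact exists_adj_adj_of_not_isUniqueNoncentralizingCoatom hM
      (forall_adj_of_mem_centerOf hM hMna (hx hxM) hxL hxG hcase) (h₁ (hx hxM) hyL)
  · obtain ⟨w, hyw, hwx⟩ := exists_adj_adj_of_not_isUniqueNoncentralizingCoatom hL
      (forall_adj_of_mem_centerOf_of_normal hL hLna (hy hyL) hyG) (h₂ (hy hyL) hxM)
    exact ⟨w, hwx.symm, hyw.symm⟩
  · exact exists_adj_adj_of_not_inf_le hL.1 hM.1 hxL hyM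
      (not_inf_le_centralizer_left hM hxL hxZ hxM hcase)
      (not_inf_le_centralizer_right hL hyM hyZ hyL)

/-- Lemma 2.11 / `lem:ncmaxnormcombined`. -/
theorem statement_6 (h2gen : ∃ a b : G, Subgroup.closure {a, b} = ⊤)
    {L M : Subgroup G} (hL : IsCoatom L) (hM : IsCoatom M) (hLn : L.Normal)
    (hLna : ∃ a ∈ L, ∃ b ∈ L, a * b ≠ b * a)
    (hMna : ∃ a ∈ M, ∃ b ∈ M, a * b ≠ b * a)
    {x y : G} (hxL : x ∈ L) (hxZ : x ∉ centerOf L)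
    (hyM : y ∈ M) (hyZ : y ∉ centerOf M)
    (hcase : (L ⊓ Subgroup.centralizer {x}).Normal ∨ M.Normal) :
    (ncGraph G).Reachable x y ∧ (ncGraph G).dist x y ≤ 3 ∧
      ((ncGraph G).dist x y = 3 ↔
        (x ∈ centerOf M ∧ y ∉ L ∧
          ∀ K : Subgroup G, IsCoatom K → y ∈ K → (∃ k ∈ K, k * y ≠ y * k) → K = M) ∨
        (y ∈ centerOf L ∧ x ∉ M ∧
          ∀ K : Subgroup G, IsCoatom K → x ∈ K → (∃ k ∈ K, k * x ≠ x * k) → K = L)) := by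
  have := hLn
  by_cases hΦ : (x ∈ centerOf M ∧ y ∉ L ∧ IsUniqueNoncentralizingCoatom M y) ∨
      (y ∈ centerOf L ∧ x ∉ M ∧ IsUniqueNoncentralizingCoatom L x)
  · have h3 : (ncGraph G).Reachable x y ∧ (ncGraph G).dist x y = 3 := by
      rcases hΦ with ⟨hxZM, hyL, huniq⟩ | ⟨hyZL, hxM, huniq⟩
      · exact reachable_and_dist_eq_three h2gen hL hM hxZM hxL hxZ
          (forall_adj_of_mem_centerOf hM hMna hxZM hxL
            (notMem_center_of_notMem_centerOf hxL hxZ) hcase)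
          hyM hyZ (not_inf_le_centralizer_right hL hyM hyZ hyL) huniq
      · obtain ⟨hr, hd⟩ := reachable_and_dist_eq_three h2gen hM hL hyZL hyM hyZ
          (forall_adj_of_mem_centerOf_of_normal hL hLna hyZL
            (notMem_center_of_notMem_centerOf hyM hyZ))
          hxL hxZ (inf_comm L M ▸ not_inf_le_centralizer_left hM hxL hxZ hxM hcase) huniq
        exact ⟨hr.symm, SimpleGraph.dist_comm.trans hd⟩
    exact ⟨h3.1, h3.2.le, iff_of_true h3.2 hΦ⟩
  · obtain ⟨w, hxw, hwy⟩ := exists_adj_adj hL hM hLna hMna hxL hxZ hyM hyZ hcase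
      (fun h h' hu => hΦ (.inl ⟨h, h', hu⟩)) (fun h h' hu => hΦ (.inr ⟨h, h', hu⟩))
    have h2 := SimpleGraph.dist_le (.cons hxw (.cons hwy .nil))
    simp only [SimpleGraph.Walk.length_cons, SimpleGraph.Walk.length_nil] at h2
    exact ⟨hxw.reachable.trans hwy.reachable, by omega, iff_of_false (by omega) hΦ⟩

end NC
end

section
/- Let G be a finitely generated non-cyclic group containing a normal maximal subgroup M, and suppose that K ∩ M = L ∩ M for all maximal subgroups K and L of G distinct from M. Then for any two distinct maximal subgroups K and L of G distinct from M, K ∩ M = K ∩ L = Φ(G). Moreover, if G is finite, then G is soluble; and if in addition M is the unique normal maximal subgroup of G, then G contains exactly two conjugacy classes of maximal subgroups. -/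
/-!
A maximal subgroup `K ≠ M` meets `M` in the common intersection of all such, which is
therefore `Φ(G)`; and `K` is generated by `K ⊓ M` together with any subgroup of `K` not inside
`M`, so two such maximal subgroups cannot share anything outside `M`.

In `Q = G/Φ(G)` the image `N` of `M` thus meets every other maximal subgroup trivially. By the
Frattini argument every Sylow subgroup of `N` is then normal in `Q`, so `N` is nilpotent; as
`Q/N` is cyclic and `Φ(G)` is nilpotent, `G` is soluble. Every other maximal subgroup `W` of `Q`
is a complement of `N` whose only nontrivial subgroup is `W` itself, so it has prime order
`p = |Q : N|`. It is a Sylow `p`-subgroup unless `Q` is a `p`-group, and then all maximal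
subgroups of `Q` would be normal. Sylow's theorem makes all these `W` conjugate.
-/

open Subgroup

namespace NC

variable {G : Type*} [Group G]

open scoped Pointwise

theorem conjSub_eq_smul (g : G) (H : Subgroup G) : conjSub g H = MulAut.conj g • H := rfl

theorem map_conjSub {H : Type*} [Group H] (f : G →* H) (g : G) (K : Subgroup G) :
    (conjSub g K).map f = conjSub (f g) (K.map f) := by
  simp only [conjSub, map_map]
  congr 1
  ext x
  simp

section NormalCoatom

variable {M : Subgroup G}

theorem eq_inf_sup_of_le_of_not_le [M.Normal] (hM : IsCoatom M) {H T : Subgroup G}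
    (hHT : H ≤ T) (hHM : ¬ H ≤ M) : T = T ⊓ M ⊔ H := by
  refine le_antisymm (fun t ht => ?_) (sup_le inf_le_left hHT)
  have hMH : M ⊔ H = ⊤ := codisjoint_iff.mp (hM.not_le_iff_codisjoint.mp hHM)
  obtain ⟨m, hm, h, hh, rfl⟩ := mem_sup_of_normal_left.mp (hMH ▸ mem_top t : t ∈ M ⊔ H)
  have hmT : m ∈ T := by simpa using mul_mem ht (inv_mem (hHT hh))
  exact mul_mem_sup ⟨hmT, hm⟩ hh

theorem inf_eq_frattini_of_forall_inf_eq (hM : IsCoatom M)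
    (hint : ∀ K L : Subgroup G, IsCoatom K → IsCoatom L → K ≠ M → L ≠ M →
      K ⊓ M = L ⊓ M)
    {K : Subgroup G} (hK : IsCoatom K) (hKM : K ≠ M) : K ⊓ M = frattini G := by
  refine le_antisymm (le_iInf₂ fun T hT => ?_)
    (le_inf (frattini_le_coatom hK) (frattini_le_coatom hM))
  by_cases hTM : T = M
  · exact hTM ▸ inf_le_right
  · exact (hint K T hK hT hKM hTM).trans_le inf_le_left

theorem inf_le_of_forall_inf_eq [M.Normal] (hM : IsCoatom M)
    (hint : ∀ K L : Subgroup G, IsCoatom K → IsCoatom L → K ≠ M → L ≠ M →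
      K ⊓ M = L ⊓ M)
    {K L : Subgroup G} (hK : IsCoatom K) (hL : IsCoatom L) (hKM : K ≠ M) (hLM : L ≠ M)
    (hKL : K ≠ L) : K ⊓ L ≤ M := by
  by_contra h
  refine hKL ?_
  calc K = K ⊓ M ⊔ K ⊓ L := eq_inf_sup_of_le_of_not_le hM inf_le_left h
    _ = L ⊓ M ⊔ K ⊓ L := by rw [hint K L hK hL hKM hLM]
    _ = L := (eq_inf_sup_of_le_of_not_le hM inf_le_right h).symm

theorem inf_eq_inf_and_inf_eq_frattini [M.Normal] (hM : IsCoatom M)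
    (hint : ∀ K L : Subgroup G, IsCoatom K → IsCoatom L → K ≠ M → L ≠ M →
      K ⊓ M = L ⊓ M)
    {K L : Subgroup G} (hK : IsCoatom K) (hL : IsCoatom L) (hKM : K ≠ M) (hLM : L ≠ M)
    (hKL : K ≠ L) : K ⊓ M = K ⊓ L ∧ K ⊓ M = frattini G := by
  have hΦ := inf_eq_frattini_of_forall_inf_eq hM hint hK hKM
  refine ⟨le_antisymm ?_ ?_, hΦ⟩
  · exact le_inf inf_le_left (hΦ ▸ frattini_le_coatom hL)
  · exact le_inf inf_le_left (inf_le_of_forall_inf_eq hM hint hK hL hKM hLM hKL)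

end NormalCoatom

section TrivialMeet

variable {Q : Type*} [Group Q] {N : Subgroup Q}

theorem eq_top_of_le_of_not_le [IsCoatomic (Subgroup Q)]
    (hmeet : ∀ W : Subgroup Q, IsCoatom W → W ≠ N → W ⊓ N = ⊥) {S H : Subgroup Q}
    (hSN : S ≤ N) (hS : S ≠ ⊥) (hSH : S ≤ H) (hHN : ¬ H ≤ N) : H = ⊤ := by
  refine (eq_top_or_exists_le_coatom H).resolve_right ?_
  rintro ⟨W, hW, hHW⟩
  have hWN : W ≠ N := fun h => hHN (h ▸ hHW)
  exact hS (le_bot_iff.mp (hmeet W hW hWN ▸ le_inf (hSH.trans hHW) hSN))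

theorem isNilpotent_of_forall_inf_eq_bot [Finite Q] [N.Normal] (hN : IsCoatom N)
    (hmeet : ∀ W : Subgroup Q, IsCoatom W → W ≠ N → W ⊓ N = ⊥) :
    Group.IsNilpotent N := by
  refine ((Group.isNilpotent_of_finite_tfae (G := N)).out 0 3).mpr ?_
  intro p _ P
  apply Normal.of_map_subtype
  by_cases hP : (P : Subgroup N).map N.subtype = ⊥
  · rw [hP]
    infer_instance
  have hPN : ¬ normalizer ((P : Subgroup N).map N.subtype) ≤ N := fun h =>
    hN.ne_top (top_le_iff.mp ((Sylow.normalizer_sup_eq_top P).ge.trans (sup_le h le_rfl)))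
  exact normalizer_eq_top_iff.mp
    (eq_top_of_le_of_not_le hmeet (map_subtype_le _) hP le_normalizer hPN)

theorem isMulCommutative_quotient_of_isCoatom [N.Normal] (hN : IsCoatom N) :
    IsMulCommutative (Q ⧸ N) := by
  obtain ⟨x, -, hx⟩ := SetLike.not_le_iff_exists.mp fun h => hN.ne_top (top_le_iff.mp h)
  suffices zpowers (x : Q ⧸ N) = ⊤ from
    (isCyclic_iff_exists_zpowers_eq_top.mpr ⟨_, this⟩).isMulCommutative
  refine comap_injective (QuotientGroup.mk'_surjective N) ?_
  rw [← QuotientGroup.mk'_apply, ← MonoidHom.map_zpowers, QuotientGroup.comap_map_mk',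
    comap_top]
  exact hN.lt_iff.mp (left_lt_sup.mpr fun h => hx (h (mem_zpowers x)))

theorem isSolvable_of_forall_inf_eq_bot [Finite Q] [N.Normal] (hN : IsCoatom N)
    (hmeet : ∀ W : Subgroup Q, IsCoatom W → W ≠ N → W ⊓ N = ⊥) :
    Group.IsSolvable Q := by
  have := isNilpotent_of_forall_inf_eq_bot hN hmeet
  have := isMulCommutative_quotient_of_isCoatom hN
  exact (Group.isSolvable_iff_subgroup_quotient N).mpr
    ⟨inferInstance, Group.isSolvable_of_comm fun a b => mul_comm' a b⟩

theorem isComplement'_of_isCoatom [N.Normal] (hN : IsCoatom N)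
    (hmeet : ∀ W : Subgroup Q, IsCoatom W → W ≠ N → W ⊓ N = ⊥) {W : Subgroup Q}
    (hW : IsCoatom W) (hWN : W ≠ N) : IsComplement' W N :=
  isComplement'_of_disjoint_and_mul_eq_univ (disjoint_iff.mpr (hmeet W hW hWN)) <| by
    rw [← mul_normal, hW.sup_eq_top_of_ne hN hWN, coe_top]

theorem eq_of_le_of_ne_bot [N.Normal] (hN : IsCoatom N)
    (hmeet : ∀ W : Subgroup Q, IsCoatom W → W ≠ N → W ⊓ N = ⊥) {W H : Subgroup Q}
    (hW : IsCoatom W) (hWN : W ≠ N) (hHW : H ≤ W) (hH : H ≠ ⊥) : H = W := by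
  have hHN : ¬ H ≤ N := fun h => hH (le_bot_iff.mp (hmeet W hW hWN ▸ le_inf hHW h))
  rw [eq_inf_sup_of_le_of_not_le hN hHW hHN, hmeet W hW hWN, bot_sup_eq]

theorem card_prime_of_forall_eq_of_ne_bot [Finite Q] {H : Subgroup Q} (hH : H ≠ ⊥)
    (h : ∀ K ≤ H, K ≠ ⊥ → K = H) : (Nat.card H).Prime := by
  have := (nontrivial_iff_ne_bot H).mpr hH
  have hp : (Nat.card H).minFac.Prime := Nat.minFac_prime Finite.one_lt_card.ne'
  have := Fact.mk hp
  obtain ⟨x, hx⟩ := exists_prime_orderOf_dvd_card' _ (Nat.minFac_dvd (Nat.card H))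
  have hx1 : (x : Q) ≠ 1 := fun h1 => hp.ne_one (by rw [← hx, ← orderOf_coe, h1, orderOf_one])
  have hxH : zpowers (x : Q) = H := h _ (zpowers_le.mpr x.2) (zpowers_ne_bot.mpr hx1)
  rwa [← hxH, Nat.card_zpowers, orderOf_coe, hx]

theorem eq_sylow_of_isCoatom [Finite Q]
    (huniq : ∀ T : Subgroup Q, IsCoatom T → T.Normal → T = N) {W : Subgroup Q}
    (hW : IsCoatom W) (hWN : W ≠ N) {p : ℕ} [Fact p.Prime] (P : Sylow p Q)
    (hWP : W ≤ P) : W = P := by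
  refine ((hW.le_iff.mp hWP).resolve_left fun hP => hWN (huniq W hW ?_)).symm
  have : IsPGroup p Q := P.isPGroup'.of_equiv (hP ▸ topEquiv)
  have := this.isNilpotent
  exact NormalizerCondition.normal_of_coatom W Group.normalizerCondition_of_isNilpotent hW

theorem exists_conjSub_eq_of_forall_inf_eq_bot [Finite Q] [N.Normal] (hN : IsCoatom N)
    (hmeet : ∀ W : Subgroup Q, IsCoatom W → W ≠ N → W ⊓ N = ⊥)
    (huniq : ∀ T : Subgroup Q, IsCoatom T → T.Normal → T = N) {W W' : Subgroup Q}
    (hW : IsCoatom W) (hWN : W ≠ N) (hW' : IsCoatom W') (hW'N : W' ≠ N) :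
    ∃ g : Q, conjSub g W = W' := by
  have hcard {V : Subgroup Q} (hV : IsCoatom V) (hVN : V ≠ N) : Nat.card V = N.index :=
    (isComplement'_of_isCoatom hN hmeet hV hVN).index_eq_card.symm
  have hp : N.index.Prime := hcard hW hWN ▸ card_prime_of_forall_eq_of_ne_bot
    (fun h => hWN ((hW.le_iff_eq hN.ne_top).mp (h ▸ bot_le)).symm)
    fun K hKW hK => eq_of_le_of_ne_bot hN hmeet hW hWN hKW hK
  have := Fact.mk hp
  have hsylow {V : Subgroup Q} (hV : IsCoatom V) (hVN : V ≠ N) : ∃ P : Sylow N.index Q, V = P :=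
    have hVp : IsPGroup N.index V := .of_card (n := 1) (by rw [hcard hV hVN, pow_one])
    let ⟨P, hVP⟩ := hVp.exists_le_sylow
    ⟨P, eq_sylow_of_isCoatom huniq hV hVN P hVP⟩
  obtain ⟨P, rfl⟩ := hsylow hW hWN
  obtain ⟨P', rfl⟩ := hsylow hW' hW'N
  obtain ⟨g, hg⟩ := MulAction.exists_smul_eq Q P P'
  exact ⟨g, by rw [← hg, Sylow.smul_def, Sylow.pointwise_smul_def, conjSub_eq_smul]⟩

end TrivialMeet

theorem isCoatom_map_of_ker_le {H : Type*} [Group H] {f : G →* H}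
    (hf : Function.Surjective f) {K : Subgroup G} (hK : IsCoatom K) (hker : f.ker ≤ K) :
    IsCoatom (K.map f) := by
  refine ⟨fun h => hK.ne_top ?_, fun B hB => comap_injective hf ?_⟩
  · rw [← comap_map_eq_self hker, h, comap_top]
  · rw [comap_top]
    exact hK.2 _ (comap_map_eq_self hker ▸ (comap_lt_comap_of_surjective hf).mpr hB)

theorem exists_conjSub_eq_of_map_eq {H : Type*} [Group H] {f : G →* H}
    (hf : Function.Surjective f) {K T : Subgroup G} (hK : f.ker ≤ K) (hT : f.ker ≤ T) {h : H}
    (hKT : conjSub h (K.map f) = T.map f) : ∃ g : G, conjSub g K = T := by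
  obtain ⟨g, rfl⟩ := hf h
  refine ⟨g, map_injective_of_ker_le f ?_ hT (by rw [map_conjSub, hKT])⟩
  rw [conjSub_eq_smul, ← Normal.conj_smul_eq_self g f.ker]
  exact pointwise_smul_le_pointwise_smul_iff.mpr hK

theorem exists_isCoatom_ne_of_not_isCyclic [IsCoatomic (Subgroup G)] (hnc : ¬ IsCyclic G)
    {M : Subgroup G} (hM : IsCoatom M) : ∃ K : Subgroup G, IsCoatom K ∧ K ≠ M := by
  obtain ⟨x, -, hx⟩ := SetLike.not_le_iff_exists.mp fun h => hM.ne_top (top_le_iff.mp h)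
  obtain ⟨K, hK, hxK⟩ := (eq_top_or_exists_le_coatom (zpowers x)).resolve_left
    fun h => hnc (isCyclic_iff_exists_zpowers_eq_top.mpr ⟨x, h⟩)
  exact ⟨K, hK, fun h => hx (h ▸ hxK (mem_zpowers x))⟩

section FrattiniQuotient

variable {M : Subgroup G}

theorem inf_map_mk_frattini_eq_bot (hM : IsCoatom M)
    (hΦ : ∀ K : Subgroup G, IsCoatom K → K ≠ M → K ⊓ M = frattini G)
    {W : Subgroup (G ⧸ frattini G)} (hW : IsCoatom W)
    (hWM : W ≠ M.map (QuotientGroup.mk' (frattini G))) :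
    W ⊓ M.map (QuotientGroup.mk' (frattini G)) = ⊥ := by
  have hπ := QuotientGroup.mk'_surjective (frattini G)
  have hK := isCoatom_comap_of_surjective hπ hW
  have hKM : W.comap (QuotientGroup.mk' _) ≠ M := fun h =>
    hWM (h ▸ (map_comap_eq_self_of_surjective hπ W).symm)
  refine comap_injective hπ ?_
  rw [comap_inf, comap_map_eq_self (by simpa using frattini_le_coatom hM), hΦ _ hK hKM,
    MonoidHom.comap_bot, QuotientGroup.ker_mk']

theorem map_mk_frattini_eq_of_isCoatom_of_normal
    (huniq : ∀ T : Subgroup G, IsCoatom T → T.Normal → T = M)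
    {W : Subgroup (G ⧸ frattini G)} (hW : IsCoatom W) (hWn : W.Normal) :
    W = M.map (QuotientGroup.mk' (frattini G)) := by
  have hπ := QuotientGroup.mk'_surjective (frattini G)
  rw [← map_comap_eq_self_of_surjective hπ W,
    huniq _ (isCoatom_comap_of_surjective hπ hW) (hWn.comap _)]

theorem isSolvable_of_forall_inf_eq_frattini [Finite G] [M.Normal] (hM : IsCoatom M)
    (hΦ : ∀ K : Subgroup G, IsCoatom K → K ≠ M → K ⊓ M = frattini G) :
    Group.IsSolvable G := by
  have hπ := QuotientGroup.mk'_surjective (frattini G)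
  have hker : (QuotientGroup.mk' (frattini G)).ker ≤ M := by simpa using frattini_le_coatom hM
  have : (M.map (QuotientGroup.mk' (frattini G))).Normal := Normal.map inferInstance _ hπ
  have := frattini_nilpotent (G := G)
  have := isSolvable_of_forall_inf_eq_bot (isCoatom_map_of_ker_le hπ hM hker)
    fun _ => inf_map_mk_frattini_eq_bot hM hΦ
  exact (Group.isSolvable_iff_subgroup_quotient (frattini G)).mpr ⟨inferInstance, this⟩

theorem twoMaxClasses_of_forall_inf_eq_frattini [Finite G] [M.Normal] (hnc : ¬ IsCyclic G)
    (hM : IsCoatom M) (hΦ : ∀ K : Subgroup G, IsCoatom K → K ≠ M → K ⊓ M = frattini G)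
    (huniq : ∀ T : Subgroup G, IsCoatom T → T.Normal → T = M) : TwoMaxClasses G := by
  set π := QuotientGroup.mk' (frattini G)
  have hπ : Function.Surjective π := QuotientGroup.mk'_surjective _
  have hker {K : Subgroup G} (hK : IsCoatom K) : π.ker ≤ K := by
    simpa [π] using frattini_le_coatom hK
  have : (M.map π).Normal := Normal.map inferInstance _ hπ
  have hmap_ne {K : Subgroup G} (hK : IsCoatom K) (hKM : K ≠ M) : K.map π ≠ M.map π :=
    fun h => hKM (map_injective_of_ker_le π (hker hK) (hker hM) h)
  obtain ⟨K, hK, hKM⟩ := exists_isCoatom_ne_of_not_isCyclic hnc hM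
  refine ⟨K, M, hK, hM, fun g h => hKM ?_, fun T hT => ?_⟩
  · exact MulAction.injective (MulAut.conj g) (h.trans (Normal.conj_smul_eq_self g M).symm)
  by_cases hTM : T = M
  · exact .inr ⟨1, by rw [hTM, conjSub_eq_smul, map_one, one_smul]⟩
  obtain ⟨h, hh⟩ := exists_conjSub_eq_of_forall_inf_eq_bot
    (isCoatom_map_of_ker_le hπ hM (hker hM)) (fun _ => inf_map_mk_frattini_eq_bot hM hΦ)
    (fun _ => map_mk_frattini_eq_of_isCoatom_of_normal huniq)
    (isCoatom_map_of_ker_le hπ hK (hker hK)) (hmap_ne hK hKM)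
    (isCoatom_map_of_ker_le hπ hT (hker hT)) (hmap_ne hT hTM)
  exact .inl ((exists_conjSub_eq_of_map_eq hπ (hker hK) (hker hT) hh).imp fun _ => Eq.symm)

end FrattiniQuotient

theorem statement_7_general (hnc : ¬ IsCyclic G)
    {M : Subgroup G} (hM : IsCoatom M) (hMn : M.Normal)
    (hint : ∀ K L : Subgroup G, IsCoatom K → IsCoatom L → K ≠ M → L ≠ M →
      K ⊓ M = L ⊓ M) :
    (∀ K L : Subgroup G, IsCoatom K → IsCoatom L → K ≠ M → L ≠ M → K ≠ L →
      K ⊓ M = K ⊓ L ∧ K ⊓ M = frattini G) ∧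
    (Finite G → IsSolvable G ∧
      ((∀ T : Subgroup G, IsCoatom T → T.Normal → T = M) → TwoMaxClasses G)) := by
  have hΦ : ∀ K : Subgroup G, IsCoatom K → K ≠ M → K ⊓ M = frattini G :=
    fun _ hK hKM => inf_eq_frattini_of_forall_inf_eq hM hint hK hKM
  refine ⟨fun K L hK hL hKM hLM hKL => inf_eq_inf_and_inf_eq_frattini hM hint hK hL hKM hLM hKL,
    fun _ => ⟨isSolvable_of_forall_inf_eq_frattini hM hΦ,
      twoMaxClasses_of_forall_inf_eq_frattini hnc hM hΦ⟩⟩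

/-- Lemma 3.1 / `lem:twoconjclass`. -/
theorem statement_7 (hfg : Group.FG G) (hnc : ¬ IsCyclic G)
    {M : Subgroup G} (hM : IsCoatom M) (hMn : M.Normal)
    (hint : ∀ K L : Subgroup G, IsCoatom K → IsCoatom L → K ≠ M → L ≠ M →
      K ⊓ M = L ⊓ M) :
    (∀ K L : Subgroup G, IsCoatom K → IsCoatom L → K ≠ M → L ≠ M → K ≠ L →
      K ⊓ M = K ⊓ L ∧ K ⊓ M = frattini G) ∧
    (Finite G → IsSolvable G ∧
      ((∀ T : Subgroup G, IsCoatom T → T.Normal → T = M) → TwoMaxClasses G)) :=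
  statement_7_general hnc hM hMn hint

end NC
end

section
/- Let G be a finite group with G = P ⋊ Q, where P is a nontrivial normal Sylow p-subgroup and Q is a nontrivial Sylow q-subgroup for distinct primes p and q, and Q is cyclic and acts irreducibly on P/Φ(P). Let R be the unique maximal subgroup of Q, and suppose R is normal in G. Then PR = P × R (that is, R centralises P and P ∩ R = 1), Φ(G) = Φ(P) × R, and Φ(G) equals the intersection of each pair of distinct maximal subgroups of G. -/
/-!
The maximal subgroups of `G = P ⋊ Q` are `P R`, the only one containing `P`, and the conjugates
of `Φ(P) Q`. A maximal subgroup `M` not containing `P` has index `|P : P ∩ M|`, a power of `p`, so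
a fixed point of `Q` acting on `G ⧸ M` puts a conjugate `Q^g` inside `M`; then `(P ∩ M) Φ(P)` is
`Q^g`-invariant, hence equal to `Φ(P)` by irreducibility (not to `P`, as `Φ(P)` is
non-generating), and `M = Φ(P) Q^g`. All of these contain `Φ(P) R`, and since every proper
subgroup of `Q^g` lies in `R`, Dedekind's law shows that two distinct ones meet exactly in
`Φ(P) R`.
-/

open Subgroup Pointwise

namespace NC

variable {G : Type*} [Group G]

section Lattice

variable {α : Type*} [PartialOrder α] [OrderTop α] {x y m : α}

lemma _root_.isCoatom_of_forall_le_of_ne_top (hyx : y ≤ x) (hx : x ≠ ⊤)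
    (h : ∀ t, y ≤ t → t ≠ ⊤ → t ≤ x) : IsCoatom x :=
  ⟨hx, fun t hxt => by_contra fun ht => (h t (hyx.trans hxt.le) ht).not_gt hxt⟩

lemma _root_.IsCoatom.eq_of_forall_le_of_ne_top (hm : IsCoatom m) (hym : y ≤ m) (hx : x ≠ ⊤)
    (h : ∀ t, y ≤ t → t ≠ ⊤ → t ≤ x) : m = x :=
  ((hm.le_iff.mp (h m hym hm.ne_top)).resolve_left hx).symm

end Lattice

/-- Dedekind's modular law. -/
lemma _root_.Subgroup.inf_sup_assoc_of_le_of_coe_sup_eq_mul {x y z : Subgroup G} (h : z ≤ x)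
    (hyz : ((y ⊔ z : Subgroup G) : Set G) = y * z) : x ⊓ y ⊔ z = x ⊓ (y ⊔ z) := by
  refine le_antisymm (sup_le (inf_le_inf_left x le_sup_left) (le_inf h le_sup_right)) ?_
  rintro a ⟨hax, hayz⟩
  obtain ⟨b, hb, c, hc, rfl⟩ : a ∈ (y : Set G) * z := hyz ▸ hayz
  have hbx : b ∈ x := by simpa using x.mul_mem hax (x.inv_mem (h hc))
  exact mul_mem (mem_sup_left ⟨hbx, hb⟩) (mem_sup_right hc)

lemma _root_.Subgroup.inf_sup_assoc_of_le_of_normal_left {x y z : Subgroup G} [y.Normal]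
    (h : z ≤ x) : x ⊓ y ⊔ z = x ⊓ (y ⊔ z) :=
  inf_sup_assoc_of_le_of_coe_sup_eq_mul h (normal_mul y z)

lemma _root_.Subgroup.inf_sup_assoc_of_le_of_normal_right {x y z : Subgroup G} [z.Normal]
    (h : z ≤ x) : x ⊓ y ⊔ z = x ⊓ (y ⊔ z) :=
  inf_sup_assoc_of_le_of_coe_sup_eq_mul h (mul_normal y z)

lemma _root_.Subgroup.index_eq_relIndex_of_sup_eq_top {M N : Subgroup G} [N.Normal]
    [N.FiniteIndex] (h : M ⊔ N = ⊤) : M.index = M.relIndex N := by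
  have hM := relIndex_mul_index (inf_le_left : M ⊓ N ≤ M)
  have hN := relIndex_mul_index (inf_le_right : M ⊓ N ≤ N)
  rw [inf_relIndex_left, ← relIndex_sup_right, h, relIndex_top_right] at hM
  rw [inf_relIndex_right, ← hM, mul_comm] at hN
  exact (Nat.eq_of_mul_eq_mul_left (Nat.pos_of_ne_zero FiniteIndex.index_ne_zero) hN).symm

lemma _root_.IsPGroup.exists_conj_smul_le_of_not_dvd_index {q : ℕ} [Fact q.Prime]
    {H M : Subgroup G} (hH : IsPGroup q H) (hM : ¬ q ∣ M.index) :
    ∃ g : G, MulAut.conj g • H ≤ M := by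
  obtain ⟨x, hx⟩ := hH.nonempty_fixed_point_of_prime_not_dvd_card (G ⧸ M) hM
  obtain ⟨g, rfl⟩ := QuotientGroup.mk_surjective x
  refine ⟨g⁻¹, fun y hy => ?_⟩
  rw [Subgroup.mem_pointwise_smul_iff_inv_smul_mem] at hy
  simp only [map_inv, inv_inv, MulAut.smul_def, MulAut.conj_apply] at hy
  have hfix : ((g * y * g⁻¹ * g : G) : G ⧸ M) = g :=
    MulAction.mem_fixedPoints.mp hx ⟨g * y * g⁻¹, hy⟩
  rw [QuotientGroup.eq] at hfix
  simpa [mul_assoc] using inv_mem hfix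

lemma _root_.frattini_eq_of_le_isCoatom_of_inf_le {F K₀ L₀ : Subgroup G}
    (hF : ∀ M, IsCoatom M → F ≤ M)
    (hinf : ∀ K L, IsCoatom K → IsCoatom L → K ≠ L → K ⊓ L ≤ F)
    (hK₀ : IsCoatom K₀) (hL₀ : IsCoatom L₀) (hne : K₀ ≠ L₀) : frattini G = F :=
  le_antisymm ((le_inf (frattini_le_coatom hK₀) (frattini_le_coatom hL₀)).trans
    (hinf _ _ hK₀ hL₀ hne)) (le_iInf₂ hF)

section Coatoms

variable {A P Q R S X Y M : Subgroup G}

lemma _root_.IsCoatom.exists_conj_smul_le_of_not_le [Finite G] {p q : ℕ} [Fact p.Prime]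
    [Fact q.Prime] [P.Normal] (hpq : p ≠ q) (hP : IsPGroup p P) (hQ : IsPGroup q Q)
    (hM : IsCoatom M) (hPM : ¬ P ≤ M) : ∃ g : G, MulAut.conj g • Q ≤ M := by
  obtain ⟨n, hn⟩ := hP.index (M.subgroupOf P)
  refine hQ.exists_conj_smul_le_of_not_dvd_index fun hqM => hpq ?_
  rw [Subgroup.index_eq_relIndex_of_sup_eq_top (hM.lt_iff.mp (left_lt_sup.mpr hPM)),
    relIndex, hn] at hqM
  exact ((Nat.prime_dvd_prime_iff_eq Fact.out Fact.out).mp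
    (Nat.Prime.dvd_of_dvd_pow Fact.out hqM)).symm

lemma _root_.IsCoatom.eq_or_exists_eq_conj_smul [Finite G] {p q : ℕ} [Fact p.Prime]
    [Fact q.Prime] [P.Normal] (hpq : p ≠ q) (hP : IsPGroup p P) (hQ : IsPGroup q Q)
    (hM : IsCoatom M) (hPX : ∀ T, P ≤ T → T ≠ ⊤ → T ≤ X) (hX : X ≠ ⊤)
    (hQY : ∀ T, Q ≤ T → T ≠ ⊤ → T ≤ Y) (hY : Y ≠ ⊤) :
    M = X ∨ ∃ g : G, M = MulAut.conj g • Y := by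
  by_cases hPM : P ≤ M
  · exact .inl (hM.eq_of_forall_le_of_ne_top hPM hX hPX)
  obtain ⟨g, hg⟩ := hM.exists_conj_smul_le_of_not_le hpq hP hQ hPM
  let e := MulEquiv.mapSubgroup (MulAut.conj g)
  have hM' : e.symm M = Y :=
    ((e.symm.isCoatom_iff M).mpr hM).eq_of_forall_le_of_ne_top (e.le_symm_apply.mpr hg) hY hQY
  exact .inr ⟨g, by rw [← hM']; exact (e.apply_symm_apply M).symm⟩

lemma _root_.inf_le_sup_of_isCoatom [A.Normal] (hX : IsCoatom (A ⊔ S)) (hY : IsCoatom Y)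
    (hAY : A ≤ Y) (hne : A ⊔ S ≠ Y) (hSR : ∀ T < S, T ≤ R) : (A ⊔ S) ⊓ Y ≤ A ⊔ R := by
  have hS : (A ⊔ S) ⊓ Y ⊓ S < S := inf_le_right.lt_of_ne fun h =>
    hne ((hX.le_iff.mp (sup_le hAY (h ▸ inf_le_left.trans inf_le_right))).resolve_left
      hY.ne_top).symm
  calc (A ⊔ S) ⊓ Y = (A ⊔ S) ⊓ Y ⊓ S ⊔ A := by
        rw [Subgroup.inf_sup_assoc_of_le_of_normal_right (le_inf le_sup_left hAY), sup_comm S A,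
          inf_eq_left.mpr inf_le_left]
    _ ≤ A ⊔ R := sup_le ((hSR _ hS).trans le_sup_right) le_sup_left

lemma _root_.inf_le_sup_of_forall_isCoatom_eq {ι : Type*} {S : ι → Subgroup G} [A.Normal]
    (hclass : ∀ M : Subgroup G, IsCoatom M → M = X ∨ ∃ i, M = A ⊔ S i)
    (hA : ∀ M : Subgroup G, IsCoatom M → A ≤ M) (hSR : ∀ i, ∀ T < S i, T ≤ R)
    {K L : Subgroup G} (hK : IsCoatom K) (hL : IsCoatom L) (hKL : K ≠ L) : K ⊓ L ≤ A ⊔ R := by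
  rcases hclass K hK with rfl | ⟨i, rfl⟩
  · rcases hclass L hL with rfl | ⟨i, rfl⟩
    · exact absurd rfl hKL
    · rw [inf_comm]
      exact inf_le_sup_of_isCoatom hL hK (hA K hK) hKL.symm (hSR i)
  · exact inf_le_sup_of_isCoatom hK hL (hA L hL) hKL (hSR i)

end Coatoms

section Frattini

variable {P W : Subgroup G}

lemma IsMaximalIn.smul (a : MulAut G) {K : Subgroup G} (h : IsMaximalIn W K) :
    IsMaximalIn (a • W) (a • K) := by
  let e := MulEquiv.mapSubgroup a
  refine ⟨e.lt_iff_lt.mpr h.1, fun T hT hTK => ?_⟩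
  have hT' : e.symm T = K :=
    h.2 _ (e.lt_symm_apply.mpr hT) (e.symm_apply_le.mpr hTK)
  rw [← hT']
  exact (e.apply_symm_apply T).symm

lemma exists_isMaximalIn_of_lt [Finite G] {K : Subgroup G} (h : W < K) :
    ∃ T, W ≤ T ∧ IsMaximalIn T K := by
  obtain ⟨T, ⟨hWT, hTK⟩, hmax⟩ :=
    Set.Finite.exists_maximalFor id {T : Subgroup G | W ≤ T ∧ T < K} (Set.toFinite _)
      ⟨W, le_rfl, h⟩
  refine ⟨T, hWT, hTK, fun T' hTT' hT'K => ?_⟩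
  by_contra hne
  exact hTT'.not_ge (hmax ⟨hWT.trans hTT'.le, lt_of_le_of_ne hT'K hne⟩ hTT'.le)

lemma phiIn_le : phiIn P ≤ P := inf_le_left

lemma phiIn_le_of_isMaximalIn (h : IsMaximalIn W P) : phiIn P ≤ W :=
  inf_le_right.trans (sInf_le h)

lemma eq_of_sup_phiIn_eq [Finite G] (hW : W ≤ P) (h : W ⊔ phiIn P = P) : W = P := by
  by_contra hne
  obtain ⟨T, hWT, hT⟩ := exists_isMaximalIn_of_lt (lt_of_le_of_ne hW hne)
  exact hT.1.not_ge (h ▸ sup_le hWT (phiIn_le_of_isMaximalIn hT))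

lemma phiIn_lt [Finite G] (hP : P ≠ ⊥) : phiIn P < P := by
  obtain ⟨T, -, hT⟩ := exists_isMaximalIn_of_lt (bot_lt_iff_ne_bot.mpr hP)
  exact (phiIn_le_of_isMaximalIn hT).trans_lt hT.1

lemma phiIn_normal (hP : P.Normal) : (phiIn P).Normal := by
  refine ⟨fun n hn g => ⟨hP.conj_mem n hn.1 g, mem_sInf.mpr fun W hW => ?_⟩⟩
  have hW' : IsMaximalIn ((MulAut.conj g)⁻¹ • W) P := by
    simpa only [← map_inv, Normal.conj_smul_eq_self] using hW.smul (MulAut.conj g)⁻¹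
  simpa using mem_inv_pointwise_smul_iff.mp (mem_sInf.mp hn.2 _ hW')

end Frattini

def ActsIrreduciblyModPhi (Q P : Subgroup G) : Prop :=
  ∀ W : Subgroup G, phiIn P ≤ W → W ≤ P →
    (∀ s ∈ Q, ∀ w ∈ W, s * w * s⁻¹ ∈ W) → W = phiIn P ∨ W = P

section Complement

variable {P Q R S T : Subgroup G}

lemma le_of_lt_of_forall_isMaximalIn_eq [Finite G]
    (hR : ∀ R' : Subgroup G, IsMaximalIn R' Q → R' = R) (hS : S < Q) : S ≤ R := by
  obtain ⟨T, hST, hT⟩ := exists_isMaximalIn_of_lt hS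
  exact hR T hT ▸ hST

lemma le_of_lt_conj_smul [R.Normal] (hQR : ∀ S < Q, S ≤ R) (g : G)
    (hS : S < MulAut.conj g • Q) : S ≤ R := by
  let e := MulEquiv.mapSubgroup (MulAut.conj g)
  have := e.symm_apply_le.mp (hQR _ (e.symm_apply_lt.mpr hS))
  rwa [show e R = R from Normal.conj_smul_eq_self g R] at this

lemma sup_ne_top_of_lt [P.Normal] (hPQ : P ⊓ Q = ⊥) (hRQ : R < Q) : P ⊔ R ≠ ⊤ := by
  intro h
  have hQ : Q ⊓ P ⊔ R = Q := by
    rw [Subgroup.inf_sup_assoc_of_le_of_normal_left hRQ.le, h, inf_top_eq]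
  rw [inf_comm, hPQ, bot_sup_eq] at hQ
  exact hRQ.ne hQ

lemma le_sup_of_le_of_ne_top [P.Normal] (hPQ : P ⊔ Q = ⊤) (hQR : ∀ S < Q, S ≤ R)
    (hPT : P ≤ T) (hT : T ≠ ⊤) : T ≤ P ⊔ R := by
  have hTQ : T ⊓ Q < Q := inf_le_right.lt_of_ne fun h =>
    hT (top_le_iff.mp (hPQ ▸ sup_le hPT (h ▸ inf_le_left)))
  calc T = T ⊓ Q ⊔ P := by
        rw [Subgroup.inf_sup_assoc_of_le_of_normal_right hPT, sup_comm, hPQ, inf_top_eq]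
    _ ≤ P ⊔ R := sup_le ((hQR _ hTQ).trans le_sup_right) le_sup_left

lemma phiIn_sup_ne_top [Finite G] [P.Normal] (hP : P ≠ ⊥) (hPQ : P ⊓ Q = ⊥) :
    phiIn P ⊔ Q ≠ ⊤ := by
  have := phiIn_normal (inferInstance : P.Normal)
  intro h
  have hP' : P ⊓ Q ⊔ phiIn P = P := by
    rw [Subgroup.inf_sup_assoc_of_le_of_normal_right phiIn_le, sup_comm, h, inf_top_eq]
  rw [hPQ, bot_sup_eq] at hP'
  exact (phiIn_lt hP).ne hP'

lemma le_phiIn_sup_of_le_of_ne_top [Finite G] [P.Normal] (hPQ : P ⊔ Q = ⊤)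
    (hirr : ActsIrreduciblyModPhi Q P) (hQT : Q ≤ T) (hT : T ≠ ⊤) : T ≤ phiIn P ⊔ Q := by
  have := phiIn_normal (inferInstance : P.Normal)
  have hinv : ∀ s ∈ Q, ∀ w ∈ T ⊓ P ⊔ phiIn P, s * w * s⁻¹ ∈ T ⊓ P ⊔ phiIn P := fun s hs =>
    conj_mem_sup_of_mem_inf_normalizer_of_mem_inf
      ⟨inf_normalizer_le_normalizer_inf ⟨le_normalizer (hQT hs), le_normalizer_of_normal hs⟩,
        le_normalizer_of_normal hs⟩
  rcases hirr _ le_sup_right (sup_le inf_le_right phiIn_le) hinv with h | h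
  · calc T = T ⊓ P ⊔ Q := by
          rw [Subgroup.inf_sup_assoc_of_le_of_normal_left hQT, hPQ, inf_top_eq]
      _ ≤ phiIn P ⊔ Q := sup_le_sup_right (le_sup_left.trans h.le) Q
  · have hPT : P ≤ T := eq_of_sup_phiIn_eq inf_le_right h ▸ inf_le_left
    exact absurd (top_le_iff.mp (hPQ ▸ sup_le hPT hQT)) hT

lemma isCoatom_sup [P.Normal] (hPQ : P ⊓ Q = ⊥) (hPQtop : P ⊔ Q = ⊤) (hQR : ∀ S < Q, S ≤ R)
    (hRQ : R < Q) : IsCoatom (P ⊔ R) :=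
  isCoatom_of_forall_le_of_ne_top le_sup_left (sup_ne_top_of_lt hPQ hRQ) fun _ =>
    le_sup_of_le_of_ne_top hPQtop hQR

lemma isCoatom_phiIn_sup [Finite G] [P.Normal] (hP : P ≠ ⊥) (hPQ : P ⊓ Q = ⊥)
    (hPQtop : P ⊔ Q = ⊤) (hirr : ActsIrreduciblyModPhi Q P) : IsCoatom (phiIn P ⊔ Q) :=
  isCoatom_of_forall_le_of_ne_top le_sup_right (phiIn_sup_ne_top hP hPQ) fun _ =>
    le_phiIn_sup_of_le_of_ne_top hPQtop hirr

lemma eq_sup_or_exists_eq_phiIn_sup_of_isCoatom [Finite G] {p q : ℕ} [Fact p.Prime]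
    [Fact q.Prime] [P.Normal] (hpq : p ≠ q) (hP : IsPGroup p P) (hQ : IsPGroup q Q)
    (hPbot : P ≠ ⊥) (hPQ : P ⊓ Q = ⊥) (hPQtop : P ⊔ Q = ⊤) (hirr : ActsIrreduciblyModPhi Q P)
    (hQR : ∀ S < Q, S ≤ R) (hRQ : R < Q) {M : Subgroup G} (hM : IsCoatom M) :
    M = P ⊔ R ∨ ∃ g : G, M = phiIn P ⊔ MulAut.conj g • Q := by
  have := phiIn_normal (inferInstance : P.Normal)
  refine (hM.eq_or_exists_eq_conj_smul hpq hP hQ (fun _ => le_sup_of_le_of_ne_top hPQtop hQR)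
    (sup_ne_top_of_lt hPQ hRQ) (fun _ => le_phiIn_sup_of_le_of_ne_top hPQtop hirr)
    (phiIn_sup_ne_top hPbot hPQ)).imp_right ?_
  rintro ⟨g, rfl⟩
  exact ⟨g, by rw [smul_sup, Normal.conj_smul_eq_self]⟩

end Complement

theorem statement_9_general {G : Type*} [Group G] [Finite G] {p q : ℕ}
    (hp : p.Prime) (hq : q.Prime) (hpq : p ≠ q)
    {P Q : Subgroup G} (hPbot : P ≠ ⊥) (hPn : P.Normal)
    (hPs : IsSylowIn p P) (hQs : IsSylowIn q Q)
    (hPQ : P ⊓ Q = ⊥) (hPQtop : P ⊔ Q = ⊤)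
    (hirr : ∀ W : Subgroup G, phiIn P ≤ W → W ≤ P →
      (∀ s ∈ Q, ∀ w ∈ W, s * w * s⁻¹ ∈ W) → W = phiIn P ∨ W = P)
    {R : Subgroup G} (hR : IsMaximalIn R Q)
    (hRuniq : ∀ R' : Subgroup G, IsMaximalIn R' Q → R' = R) (hRn : R.Normal) :
    (∀ r ∈ R, ∀ x ∈ P, r * x = x * r) ∧ P ⊓ R = ⊥ ∧
      frattini G = phiIn P ⊔ R ∧
      (∀ K L : Subgroup G, IsCoatom K → IsCoatom L → K ≠ L → K ⊓ L = frattini G) := by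
  have := Fact.mk hp
  have := Fact.mk hq
  have hQR : ∀ S < Q, S ≤ R := fun _ => le_of_lt_of_forall_isMaximalIn_eq hRuniq
  have hPR : P ⊓ R = ⊥ := le_bot_iff.mp (hPQ ▸ inf_le_inf_left P hR.1.le)
  have hclass (M : Subgroup G) (hM : IsCoatom M) :=
    eq_sup_or_exists_eq_phiIn_sup_of_isCoatom hpq hPs.1 hQs.1 hPbot hPQ hPQtop hirr hQR hR.1 hM
  have hF (M : Subgroup G) (hM : IsCoatom M) : phiIn P ⊔ R ≤ M := by
    rcases hclass M hM with rfl | ⟨g, rfl⟩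
    · exact sup_le_sup_right phiIn_le R
    · refine sup_le_sup_left ?_ _
      rw [← Normal.conj_smul_eq_self g R]
      exact pointwise_smul_le_pointwise_smul_iff.mpr hR.1.le
  have hinf (K L : Subgroup G) (hK : IsCoatom K) (hL : IsCoatom L) (hKL : K ≠ L) :
      K ⊓ L ≤ phiIn P ⊔ R :=
    have := phiIn_normal hPn
    inf_le_sup_of_forall_isCoatom_eq hclass (fun M hM => le_sup_left.trans (hF M hM))
      (fun g _ => le_of_lt_conj_smul hQR g) hK hL hKL
  have hX := isCoatom_sup hPQ hPQtop hQR hR.1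
  have hfr : frattini G = phiIn P ⊔ R := frattini_eq_of_le_isCoatom_of_inf_le hF hinf
    hX (isCoatom_phiIn_sup hPbot hPQ hPQtop hirr)
    fun h => hX.ne_top (top_le_iff.mp (hPQtop ▸ sup_le le_sup_left (h ▸ le_sup_right)))
  refine ⟨fun r hr x hx => ?_, hPR, hfr, fun K L hK hL hKL => ?_⟩
  · exact (commute_of_normal_of_disjoint R P hRn hPn (disjoint_iff.mpr hPR).symm r x hr hx).eq
  · exact le_antisymm (hfr ▸ hinf K L hK hL hKL)
      (le_inf (frattini_le_coatom hK) (frattini_le_coatom hL))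

/-- Theorem 3.2(ii)(c) / `thm:solmaxclass`. -/
theorem statement_9 {G : Type*} [Group G] [Finite G] {p q : ℕ}
    (hp : p.Prime) (hq : q.Prime) (hpq : p ≠ q)
    {P Q : Subgroup G} (hPbot : P ≠ ⊥) (hQbot : Q ≠ ⊥) (hPn : P.Normal)
    (hPs : IsSylowIn p P) (hQs : IsSylowIn q Q)
    (hPQ : P ⊓ Q = ⊥) (hPQtop : P ⊔ Q = ⊤) (hQc : IsCyclic ↥Q)
    (hirr : ∀ W : Subgroup G, phiIn P ≤ W → W ≤ P →
      (∀ s ∈ Q, ∀ w ∈ W, s * w * s⁻¹ ∈ W) → W = phiIn P ∨ W = P)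
    {R : Subgroup G} (hR : IsMaximalIn R Q)
    (hRuniq : ∀ R' : Subgroup G, IsMaximalIn R' Q → R' = R) (hRn : R.Normal) :
    (∀ r ∈ R, ∀ x ∈ P, r * x = x * r) ∧ P ⊓ R = ⊥ ∧
      frattini G = phiIn P ⊔ R ∧
      (∀ K L : Subgroup G, IsCoatom K → IsCoatom L → K ≠ L → K ⊓ L = frattini G) :=
  statement_9_general hp hq hpq hPbot hPn hPs hQs hPQ hPQtop hirr hR hRuniq hRn

end NC
end

section
/- Let G be a group containing a normal, non-abelian maximal subgroup M with Z(G) properly contained in Z(M), and let z ∈ Z(M) \ Z(G). Then the set of neighbours of z in the non-commuting, non-generating graph nc(G) is exactly G \ M. -/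
/-! Since `M` centralises `z`, no element of `M` is adjacent to `z`. For `g ∉ M`, maximality gives
`⟨M, g⟩ = G`. If `g` commuted with `z`, then `C_G(z) ⊇ ⟨M, g⟩ = G`, so `z` would be central. If
`⟨z, g⟩ = G`, then `G = Z(M)⟨g⟩` (as `Z(M)` is normal in `G`), so `M = Z(M)(M ∩ ⟨g⟩)` would be
abelian. -/

open Subgroup

namespace NC

variable {G : Type*} [Group G]

instance normal_centerOf {M : Subgroup G} [M.Normal] : (centerOf M).Normal :=
  Subgroup.normal_inf_normal _ _

lemma commute_of_mem_centerOf {M : Subgroup G} {z m : G} (hz : z ∈ centerOf M) (hm : m ∈ M) :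
    Commute z m :=
  (mem_centralizer_iff.mp hz.2 m hm).symm

lemma mem_center_of_commute_of_notMem {M : Subgroup G} (hM : IsCoatom M) {z g : G}
    (hz : z ∈ centerOf M) (hg : g ∉ M) (hzg : Commute z g) : z ∈ center G := by
  have hMle : M ≤ centralizer {z} := fun m hm =>
    mem_centralizer_singleton_iff.mpr (commute_of_mem_centerOf hz hm).symm.eq
  have htop : centralizer {z} = ⊤ := (hM.le_iff.mp hMle).resolve_right fun h =>
    hg (h ▸ mem_centralizer_singleton_iff.mpr hzg.symm.eq)
  exact Set.singleton_subset_iff.mp (centralizer_eq_top_iff_subset.mp htop)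

lemma commute_of_centerOf_sup_zpowers_eq_top {M : Subgroup G} [(centerOf M).Normal] {g : G}
    (hgen : centerOf M ⊔ zpowers g = ⊤) {a b : G} (ha : a ∈ M) (hb : b ∈ M) : Commute a b := by
  have decomp : ∀ x ∈ M, ∃ c ∈ centerOf M, ∃ y ∈ zpowers g, y ∈ M ∧ c * y = x := by
    intro x hx
    obtain ⟨c, hc, y, hy, rfl⟩ := mem_sup_of_normal_left.mp (hgen ▸ mem_top x)
    exact ⟨c, hc, y, hy, by simpa using M.mul_mem (M.inv_mem hc.1) hx, rfl⟩
  have hpow : ∀ y ∈ zpowers g, y ∈ M → Commute y b := by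
    intro y hy hyM
    obtain ⟨d, hd, w, hw, -, rfl⟩ := decomp b hb
    obtain ⟨m, rfl⟩ := mem_zpowers_iff.mp hy
    obtain ⟨n, rfl⟩ := mem_zpowers_iff.mp hw
    exact (commute_of_mem_centerOf hd hyM).symm.mul_right (Commute.zpow_zpow_self g m n)
  obtain ⟨c, hc, y, hy, hyM, rfl⟩ := decomp a ha
  exact (commute_of_mem_centerOf hc hb).mul_left (hpow y hy hyM)

theorem statement_10_general {M : Subgroup G} (hM : IsCoatom M) (hMn : M.Normal)
    (hMna : ∃ a ∈ M, ∃ b ∈ M, a * b ≠ b * a)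
    {z : G} (hz : z ∈ centerOf M) (hzZ : z ∉ Subgroup.center G) :
    ∀ g : G, (ncGraph G).Adj z g ↔ g ∉ M := by
  intro g
  refine ⟨fun hadj hgM => hadj.1 (commute_of_mem_centerOf hz hgM).eq, fun hgM => ⟨?_, ?_⟩⟩
  · exact fun hzg => hzZ (mem_center_of_commute_of_notMem hM hz hgM hzg)
  · intro hgen
    obtain ⟨a, ha, b, hb, hab⟩ := hMna
    have hsup : centerOf M ⊔ zpowers g = ⊤ := top_le_iff.mp <| hgen ▸ (closure_le _).mpr
      (Set.pair_subset (mem_sup_left hz) (mem_sup_right (mem_zpowers g)))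
    exact hab (commute_of_centerOf_sup_zpowers_eq_top hsup ha hb).eq

/-- Lemma 4.2 / `lem:zneighbs`. -/
theorem statement_10 {M : Subgroup G} (hM : IsCoatom M) (hMn : M.Normal)
    (hMna : ∃ a ∈ M, ∃ b ∈ M, a * b ≠ b * a)
    (hZ : Subgroup.center G < centerOf M)
    {z : G} (hz : z ∈ centerOf M) (hzZ : z ∉ Subgroup.center G) :
    ∀ g : G, (ncGraph G).Adj z g ↔ g ∉ M :=
  statement_10_general hM hMn hMna hz hzZ

end NC
end

section
/- Let G be a group containing a normal, non-abelian maximal subgroup M with Z(G) properly contained in Z(M). Let x ∈ M \ Z(M) and z ∈ Z(M) \ Z(G), and let 𝒥 be the set of maximal subgroups of G distinct from M. If the subgroups I ∩ M, for I ranging over some subset ℐ of 𝒥, together generate M, then there exists I ∈ 𝒥 such that x does not centralise I ∩ M. More generally, if there exists I ∈ 𝒥 such that x does not centralise I ∩ M, then the distance d(x,z) in the non-commuting, non-generating graph nc(G) is at most 3. -/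
/-!
Since `M` is normal and non-abelian, `G / Z(M)` is not cyclic, so no element generates `G`
together with `z`. If `x` fails to commute with `w ∈ J ∩ M`, then `x — w` is an edge inside `M`.
As `M ⊔ J = G` and `z` centralises `M`, some `v ∈ J` does not commute with `z`. Either some
`u ∈ J` commutes with neither `w` nor `z`, giving the path `x — w — u — z`; or, since no group is
the union of two proper subgroups, `w` centralises `J`. Then `z ∈ J`, for otherwise `J` and `z`
generate `G` and `w` would be central, and `x — wz — v — z` is a path.
-/

open Subgroup

namespace NC

variable {G : Type*} [Group G]

instance centerOf_normal_s11 (M : Subgroup G) [M.Normal] : (centerOf M).Normal :=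
  Subgroup.normal_inf_normal _ _

lemma mem_centerOf_iff_s11 {M : Subgroup G} {x : G} :
    x ∈ centerOf M ↔ x ∈ M ∧ ∀ m ∈ M, Commute m x :=
  Iff.rfl

lemma mem_center_of_sup_eq_top {H K : Subgroup G} (hHK : H ⊔ K = ⊤) {g : G}
    (hH : g ∈ centralizer (H : Set G)) (hK : g ∈ centralizer (K : Set G)) :
    g ∈ center G := by
  rw [← centralizer_univ, ← coe_top, ← hHK, sup_eq_closure, centralizer_closure]
  rintro h (hh | hh)
  exacts [hH h hh, hK h hh]

lemma sup_zpowers_eq_top {J : Subgroup G} (hJ : IsCoatom J) {z : G} (hz : z ∉ J) :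
    J ⊔ zpowers z = ⊤ :=
  hJ.lt_iff.mp (left_lt_sup.mpr (by rwa [zpowers_le]))

lemma le_or_le_of_subset_union {J A B : Subgroup G} (h : (J : Set G) ⊆ A ∪ B) :
    J ≤ A ∨ J ≤ B := by
  by_contra! hJ
  obtain ⟨⟨a, haJ, haA⟩, ⟨b, hbJ, hbB⟩⟩ := And.imp SetLike.not_le_iff_exists.mp
    SetLike.not_le_iff_exists.mp hJ
  have haB : a ∈ B := (h haJ).resolve_left haA
  have hbA : b ∈ A := (h hbJ).resolve_right hbB
  rcases h (J.mul_mem haJ hbJ) with hab | hab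
  · exact haA (by simpa using A.mul_mem hab (A.inv_mem hbA))
  · exact hbB (by simpa using B.mul_mem (B.inv_mem haB) hab)

lemma isCyclic_quotient_of_closure_pair_eq_top {N : Subgroup G} [N.Normal] {z u : G}
    (hz : z ∈ N) (h : closure {z, u} = ⊤) : IsCyclic (G ⧸ N) := by
  refine ⟨⟨(u : G ⧸ N), ?_⟩⟩
  rintro ⟨g⟩
  have hle : closure {z, u} ≤ (zpowers (u : G ⧸ N)).comap (QuotientGroup.mk' N) := by
    rw [closure_le]
    rintro _ (rfl | rfl)
    · simp [(QuotientGroup.eq_one_iff _).mpr hz]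
    · simp
  exact hle (h ▸ mem_top g)

lemma isMulCommutative_of_isCyclic_quotient_centerOf (M : Subgroup G) [M.Normal]
    [IsCyclic (G ⧸ centerOf M)] : IsMulCommutative M := by
  refine MonoidHom.isMulCommutative_of_isCyclic_of_ker_le_center
    ((QuotientGroup.mk' (centerOf M)).comp M.subtype) fun a ha => ?_
  rw [MonoidHom.mem_ker, MonoidHom.comp_apply, QuotientGroup.mk'_apply,
    QuotientGroup.eq_one_iff, mem_centerOf_iff_s11] at ha
  exact mem_center_iff.mpr fun b => Subtype.ext (ha.2 b b.2)

lemma closure_pair_ne_top_of_mem_centerOf {M : Subgroup G} [M.Normal]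
    (hMna : ∃ a ∈ M, ∃ b ∈ M, a * b ≠ b * a) {z : G} (hz : z ∈ centerOf M) (u : G) :
    closure {z, u} ≠ ⊤ := by
  intro h
  have := isCyclic_quotient_of_closure_pair_eq_top hz h
  obtain ⟨a, ha, b, hb, hab⟩ := hMna
  have := isMulCommutative_of_isCyclic_quotient_centerOf M
  exact hab congr(Subtype.val $(this.is_comm.comm (⟨a, ha⟩ : M) ⟨b, hb⟩))

lemma ncGraph_adj_of_mem {H : Subgroup G} (hH : H ≠ ⊤) {a b : G} (ha : a ∈ H) (hb : b ∈ H)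
    (hab : ¬Commute a b) : (ncGraph G).Adj a b := by
  refine ⟨hab, fun h => hH (top_unique ?_)⟩
  rw [← h, closure_le]
  rintro _ (rfl | rfl) <;> assumption

lemma ncGraph_adj_of_mem_centerOf {M : Subgroup G} [M.Normal]
    (hMna : ∃ a ∈ M, ∃ b ∈ M, a * b ≠ b * a) {z : G} (hz : z ∈ centerOf M) {u : G}
    (huz : ¬Commute u z) : (ncGraph G).Adj u z :=
  ⟨huz, by rw [Set.pair_comm]; exact closure_pair_ne_top_of_mem_centerOf hMna hz u⟩

lemma reachable_and_dist_le_three_of_adj {V : Type*} {Γ : SimpleGraph V} {a b c d : V}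
    (hab : Γ.Adj a b) (hbc : Γ.Adj b c) (hcd : Γ.Adj c d) :
    Γ.Reachable a d ∧ Γ.dist a d ≤ 3 :=
  let p := SimpleGraph.Walk.cons hab (.cons hbc (.cons hcd .nil))
  ⟨⟨p⟩, SimpleGraph.dist_le p⟩

lemma exists_not_commute_of_iSup_inf_eq {M : Subgroup G} {x : G} (hx : x ∈ M)
    (hxZ : x ∉ centerOf M) {I : Set (Subgroup G)} (hI : ⨆ K ∈ I, K ⊓ M = M) :
    ∃ K ∈ I, ∃ w ∈ K ⊓ M, ¬Commute x w := by
  by_contra! h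
  have hMx : M ≤ centralizer {x} :=
    hI ▸ iSup₂_le fun K hK w hw => mem_centralizer_singleton_iff.mpr (h K hK w hw).symm
  exact hxZ (mem_centerOf_iff_s11.mpr ⟨hx, fun m hm => mem_centralizer_singleton_iff.mp (hMx hm)⟩)

lemma ncGraph_reachable_and_dist_le_three {M J : Subgroup G} (hM : IsCoatom M) [M.Normal]
    (hMna : ∃ a ∈ M, ∃ b ∈ M, a * b ≠ b * a) {x z w : G} (hx : x ∈ M)
    (hz : z ∈ centerOf M) (hzZ : z ∉ center G) (hJ : IsCoatom J) (hJM : J ≠ M)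
    (hw : w ∈ J ⊓ M) (hxw : ¬Commute x w) :
    (ncGraph G).Reachable x z ∧ (ncGraph G).dist x z ≤ 3 := by
  obtain ⟨hwJ, hwM⟩ := mem_inf.mp hw
  obtain ⟨hzM, hzC⟩ := mem_centerOf_iff_s11.mp hz
  obtain ⟨v, hvJ, hvz⟩ : ∃ v ∈ J, ¬Commute v z := by
    by_contra! h
    exact hzZ (mem_center_of_sup_eq_top (hM.sup_eq_top_of_ne hJ hJM.symm) hzC h)
  by_cases hu : ∃ u ∈ J, ¬Commute w u ∧ ¬Commute u z
  · obtain ⟨u, huJ, hwu, huz⟩ := hu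
    exact reachable_and_dist_le_three_of_adj (ncGraph_adj_of_mem hM.1 hx hwM hxw)
      (ncGraph_adj_of_mem hJ.1 hwJ huJ hwu) (ncGraph_adj_of_mem_centerOf hMna hz huz)
  push Not at hu
  have hJw : J ≤ centralizer {w} := by
    refine (le_or_le_of_subset_union fun u huJ => ?_).resolve_right
      fun hJz => hvz (mem_centralizer_singleton_iff.mp (hJz hvJ))
    by_cases hwu : Commute w u
    · exact Or.inl (mem_centralizer_singleton_iff.mpr hwu.symm)
    · exact Or.inr (mem_centralizer_singleton_iff.mpr (hu u huJ hwu))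
  have hwv : Commute w v := (mem_centralizer_singleton_iff.mp (hJw hvJ)).symm
  have hzJ : z ∈ J := by
    by_contra hzJ
    refine hxw (mem_center_iff.mp (mem_center_of_sup_eq_top (sup_zpowers_eq_top hJ hzJ)
      (fun u hu => mem_centralizer_singleton_iff.mp (hJw hu)) fun g hg => ?_) x)
    obtain ⟨n, rfl⟩ := mem_zpowers_iff.mp hg
    exact ((hzC w hwM).zpow_right n).symm
  have hxwz : ¬Commute x (w * z) := fun h => hxw (by
    simpa using h.mul_right (hzC x hx).inv_right)
  have hwzv : ¬Commute (w * z) v := fun h => hvz (by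
    simpa using (hwv.inv_left.mul_left h).symm)
  exact reachable_and_dist_le_three_of_adj
    (ncGraph_adj_of_mem hM.1 hx (M.mul_mem hwM hzM) hxwz)
    (ncGraph_adj_of_mem hJ.1 (J.mul_mem hwJ hzJ) hvJ hwzv) (ncGraph_adj_of_mem hJ.1 hvJ hzJ hvz)

theorem statement_11_general {M : Subgroup G} (hM : IsCoatom M) (hMn : M.Normal)
    (hMna : ∃ a ∈ M, ∃ b ∈ M, a * b ≠ b * a)
    {x z : G} (hx : x ∈ M) (hxZ : x ∉ centerOf M)
    (hz : z ∈ centerOf M) (hzZ : z ∉ Subgroup.center G) :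
    (∀ I : Set (Subgroup G), (∀ I' ∈ I, IsCoatom I' ∧ I' ≠ M) →
        (⨆ I' ∈ I, I' ⊓ M) = M →
        ∃ J : Subgroup G, IsCoatom J ∧ J ≠ M ∧ ∃ w ∈ J ⊓ M, x * w ≠ w * x) ∧
      ((∃ J : Subgroup G, IsCoatom J ∧ J ≠ M ∧ ∃ w ∈ J ⊓ M, x * w ≠ w * x) →
        (ncGraph G).Reachable x z ∧ (ncGraph G).dist x z ≤ 3) := by
  have := hMn
  refine ⟨fun I hI hIM => ?_, fun ⟨J, hJ, hJM, w, hw, hxw⟩ =>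
    ncGraph_reachable_and_dist_le_three hM hMna hx hz hzZ hJ hJM hw hxw⟩
  obtain ⟨J, hJI, w, hw, hxw⟩ := exists_not_commute_of_iSup_inf_eq hx hxZ hIM
  exact ⟨J, (hI J hJI).1, (hI J hJI).2, w, hw, hxw⟩

/-- Lemma 4.3 / `lem:maxsubgendist`. -/
theorem statement_11 {M : Subgroup G} (hM : IsCoatom M) (hMn : M.Normal)
    (hMna : ∃ a ∈ M, ∃ b ∈ M, a * b ≠ b * a)
    (hZ : Subgroup.center G < centerOf M)
    {x z : G} (hx : x ∈ M) (hxZ : x ∉ centerOf M)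
    (hz : z ∈ centerOf M) (hzZ : z ∉ Subgroup.center G) :
    (∀ I : Set (Subgroup G), (∀ I' ∈ I, IsCoatom I' ∧ I' ≠ M) →
        (⨆ I' ∈ I, I' ⊓ M) = M →
        ∃ J : Subgroup G, IsCoatom J ∧ J ≠ M ∧ ∃ w ∈ J ⊓ M, x * w ≠ w * x) ∧
      ((∃ J : Subgroup G, IsCoatom J ∧ J ≠ M ∧ ∃ w ∈ J ⊓ M, x * w ≠ w * x) →
        (ncGraph G).Reachable x z ∧ (ncGraph G).dist x z ≤ 3) :=
  statement_11_general hM hMn hMna hx hxZ hz hzZ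

end NC
end

section
/- Let G be a group containing a normal, non-abelian maximal subgroup M, and a maximal subgroup K with K ∩ M = Z(M). Then, writing Ĝ := G/Z(M), M̂ := M/Z(M) and K̂ := K/Z(M) (noting Z(M) ≤ K), the following hold: K̂ is a core-free maximal subgroup of Ĝ (so Ĝ is a primitive group); M̂ is the unique minimal normal subgroup of Ĝ; Ĝ = M̂ K̂ with M̂ ∩ K̂ trivial; and K̂ has prime order. -/
/-!
Write `Z = Z(M)`. Everything rests on Dedekind's modular law `(X ⊔ Y) ⊓ U = X ⊔ (Y ⊓ U)` for
`X ≤ U`, which holds as soon as `X` or `Y` is normal. If `K` were normal, or if a normal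
subgroup `N ≠ Z` containing `Z` met `M` only in `Z`, the law would give `M = Z ⊔ ⟨g⟩` for
some `g ∈ M`; since `Z` is central in `M`, this would make `M` abelian. Finally
`|K : Z| = |G : M|`, which is prime because `G/M` has no subgroups besides the trivial ones.
-/

open Subgroup

open scoped Pointwise

namespace Subgroup

variable {G : Type*} [Group G]

theorem sup_inf_assoc_of_le_of_coe_sup {X Y U : Subgroup G}
    (hXY : ((X ⊔ Y : Subgroup G) : Set G) = X * Y) (hXU : X ≤ U) :
    (X ⊔ Y) ⊓ U = X ⊔ Y ⊓ U := by
  refine le_antisymm (fun g hg => ?_)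
    (sup_le (le_inf le_sup_left hXU) (inf_le_inf_right U le_sup_right))
  have hg' : g ∈ (X : Set G) * ↑(Y ⊓ U) := by
    rw [mul_inf_assoc X Y U hXU, ← hXY]
    exact hg
  obtain ⟨x, hx, y, hy, rfl⟩ := hg'
  exact mul_mem (mem_sup_left hx) (mem_sup_right hy)

theorem prime_card_of_isSimpleOrder (X : Type*) [Group X] [IsSimpleOrder (Subgroup X)] :
    (Nat.card X).Prime := by
  have : Nontrivial X := nontrivial_iff.1 inferInstance
  obtain ⟨g, hg⟩ := exists_ne (1 : X)
  have : IsCyclic X := ⟨g, (eq_top_iff' _).1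
    ((IsSimpleOrder.eq_bot_or_eq_top _).resolve_left (zpowers_ne_bot.2 hg))⟩
  exact Group.is_simple_iff_prime_card.1 ⟨fun H _ => IsSimpleOrder.eq_bot_or_eq_top H⟩

theorem index_prime_of_isCoatom {M : Subgroup G} [M.Normal] (hM : IsCoatom M) :
    M.index.Prime := by
  have : IsSimpleOrder (Set.Ici M) := Set.isSimpleOrder_Ici_iff_isCoatom.2 hM
  let e : Subgroup (G ⧸ M) ≃o Set.Ici M := QuotientGroup.comapMk'OrderIso M
  have : IsSimpleOrder (Subgroup (G ⧸ M)) := e.isSimpleOrder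
  exact prime_card_of_isSimpleOrder (G ⧸ M)

end Subgroup

namespace NC

variable {G : Type*} [Group G] {M K N : Subgroup G} {g : G}

theorem centerOf_normal_s14 [M.Normal] : (centerOf M).Normal := by
  unfold centerOf
  infer_instance

theorem centerOf_le : centerOf M ≤ M := inf_le_left

theorem le_centralizer_centerOf : M ≤ centralizer (centerOf M : Set G) :=
  le_centralizer_iff.2 inf_le_right

theorem mul_comm_of_le_centerOf_sup_zpowers (hg : g ∈ M)
    (hle : M ≤ centerOf M ⊔ zpowers g) {a b : G} (ha : a ∈ M) (hb : b ∈ M) :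
    a * b = b * a := by
  set H := centerOf M ⊔ zpowers g
  have hgM : zpowers g ≤ M := zpowers_le.2 hg
  have hHM : H ≤ M := sup_le centerOf_le hgM
  have hcomm : H ≤ centralizer (H : Set G) := by
    refine sup_le (le_centralizer_iff.2 (hHM.trans le_centralizer_centerOf))
      (le_centralizer_iff.2 (sup_le ?_ (le_centralizer _)))
    exact le_centralizer_iff.2 (hgM.trans le_centralizer_centerOf)
  exact mem_centralizer_iff.1 (hcomm (hle hb)) a (hle ha)

theorem normal_sup_zpowers_ne_top (hMna : ∃ a ∈ M, ∃ b ∈ M, a * b ≠ b * a) [N.Normal]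
    (hNM : N ⊓ M = centerOf M) (hg : g ∈ M) : N ⊔ zpowers g ≠ ⊤ := by
  intro htop
  obtain ⟨a, ha, b, hb, hab⟩ := hMna
  refine hab (mul_comm_of_le_centerOf_sup_zpowers hg (le_of_eq ?_) ha hb)
  calc M = (zpowers g ⊔ N) ⊓ M := by rw [sup_comm, htop, top_inf_eq]
    _ = zpowers g ⊔ N ⊓ M :=
      sup_inf_assoc_of_le_of_coe_sup (mul_normal _ _) (zpowers_le.2 hg)
    _ = centerOf M ⊔ zpowers g := by rw [hNM, sup_comm]

theorem centerOf_lt (hMna : ∃ a ∈ M, ∃ b ∈ M, a * b ≠ b * a) : centerOf M < M := by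
  refine lt_of_le_of_ne centerOf_le fun h => ?_
  obtain ⟨a, ha, b, hb, hab⟩ := hMna
  exact hab (mem_centralizer_iff.1 (le_centralizer_centerOf hb) a (h.symm ▸ ha))

theorem not_le_of_inf_eq_centerOf (hM : IsCoatom M)
    (hMna : ∃ a ∈ M, ∃ b ∈ M, a * b ≠ b * a) (hK : IsCoatom K)
    (hKM : K ⊓ M = centerOf M) :
    ¬ K ≤ M := by
  refine fun hKle => hM.ne_top (hK.2 M ?_)
  calc K = K ⊓ M := (inf_eq_left.2 hKle).symm
    _ < M := hKM ▸ centerOf_lt hMna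

theorem eq_centerOf_sup_zpowers (hM : IsCoatom M) [M.Normal] (hKM : K ⊓ M = centerOf M)
    {k : G} (hk : k ∈ K) (hkM : k ∉ M) : K = centerOf M ⊔ zpowers k := by
  have htop : M ⊔ zpowers k = ⊤ :=
    (hM.not_le_iff_codisjoint.1 fun h => hkM (h (mem_zpowers k))).eq_top
  calc K = (zpowers k ⊔ M) ⊓ K := by rw [sup_comm, htop, top_inf_eq]
    _ = zpowers k ⊔ M ⊓ K :=
      sup_inf_assoc_of_le_of_coe_sup (mul_normal _ _) (zpowers_le.2 hk)
    _ = centerOf M ⊔ zpowers k := by rw [inf_comm, hKM, sup_comm]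

theorem relIndex_centerOf_eq_index [M.Normal] (hsup : M ⊔ K = ⊤) (hKM : K ⊓ M = centerOf M) :
    (centerOf M).relIndex K = M.index :=
  calc (centerOf M).relIndex K = (K ⊓ M).relIndex K := by rw [hKM]
    _ = M.relIndex (K ⊔ M) := by rw [inf_relIndex_left, relIndex_sup_right]
    _ = M.index := by rw [sup_comm, hsup, relIndex_top_right]

theorem not_normal_of_inf_eq_centerOf (hMna : ∃ a ∈ M, ∃ b ∈ M, a * b ≠ b * a)
    (hK : IsCoatom K) (hKM : K ⊓ M = centerOf M) : ¬ K.Normal := by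
  intro hKn
  obtain ⟨a, ha, haZ⟩ := SetLike.exists_of_lt (centerOf_lt hMna)
  have haK : a ∉ K := fun haK => haZ (hKM ▸ mem_inf.2 ⟨haK, ha⟩)
  have htop : K ⊔ zpowers a = ⊤ :=
    (hK.not_le_iff_codisjoint.1 fun h => haK (h (mem_zpowers a))).eq_top
  exact normal_sup_zpowers_ne_top hMna hKM ha htop

theorem le_centerOf_of_normal_of_le (hM : IsCoatom M) [M.Normal]
    (hMna : ∃ a ∈ M, ∃ b ∈ M, a * b ≠ b * a) (hK : IsCoatom K)
    (hKM : K ⊓ M = centerOf M)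
    [N.Normal] (hNK : N ≤ K) : N ≤ centerOf M := by
  by_cases hNM : N ≤ M
  · exact hKM ▸ le_inf hNK hNM
  refine (not_normal_of_inf_eq_centerOf hMna hK hKM ?_).elim
  have hsup : N ⊔ M = ⊤ := sup_comm M N ▸ (hM.not_le_iff_codisjoint.1 hNM).eq_top
  have hKeq : K = N ⊔ centerOf M := by
    calc K = (N ⊔ M) ⊓ K := by rw [hsup, top_inf_eq]
      _ = N ⊔ M ⊓ K := sup_inf_assoc_of_le_of_coe_sup (mul_normal _ _) hNK
      _ = N ⊔ centerOf M := by rw [inf_comm, hKM]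
  have := centerOf_normal_s14 (M := M)
  rw [hKeq]
  infer_instance

theorem eq_centerOf_or_eq_of_normal (hK : IsCoatom K) (hKM : K ⊓ M = centerOf M) [N.Normal]
    (hZN : centerOf M ≤ N) (hNM : N ≤ M) : N = centerOf M ∨ N = M := by
  by_cases hNK : N ≤ K
  · exact .inl (le_antisymm (hKM ▸ le_inf hNK hNM) hZN)
  have htop : K ⊔ N = ⊤ := (hK.not_le_iff_codisjoint.1 hNK).eq_top
  refine .inr ?_
  calc N = N ⊔ K ⊓ M := by rw [hKM, sup_eq_left.2 hZN]
    _ = (N ⊔ K) ⊓ M := (sup_inf_assoc_of_le_of_coe_sup (normal_mul _ _) hNM).symm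
    _ = M := by rw [sup_comm, htop, top_inf_eq]

theorem le_of_normal_of_inf_eq_centerOf (hM : IsCoatom M) [M.Normal]
    (hMna : ∃ a ∈ M, ∃ b ∈ M, a * b ≠ b * a) (hK : IsCoatom K)
    (hKM : K ⊓ M = centerOf M)
    [N.Normal] (hNM : N ⊓ M = centerOf M) : N ≤ K := by
  by_contra hNK
  by_cases hNleM : N ≤ M
  · refine hNK (calc N = N ⊓ M := (inf_eq_left.2 hNleM).symm
      _ = K ⊓ M := hNM.trans hKM.symm
      _ ≤ K := inf_le_left)
  obtain ⟨k, hk, hkM⟩ := SetLike.not_le_iff_exists.1 (not_le_of_inf_eq_centerOf hM hMna hK hKM)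
  have hkNM : k ∈ ((N ⊔ M : Subgroup G) : Set G) := by
    rw [sup_comm, (hM.not_le_iff_codisjoint.1 hNleM).eq_top]
    trivial
  rw [normal_mul] at hkNM
  obtain ⟨n, hn, m, hm, rfl⟩ := hkNM
  have hKle : K ≤ N ⊔ zpowers m := by
    rw [eq_centerOf_sup_zpowers hM hKM hk hkM, ← hNM]
    exact sup_le (inf_le_left.trans le_sup_left)
      (zpowers_le.2 (mul_mem (mem_sup_left hn) (mem_sup_right (mem_zpowers m))))
  have htop : N ⊔ zpowers m = ⊤ :=
    (hK.le_iff.1 hKle).resolve_right fun h => hNK (h ▸ le_sup_left)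
  exact normal_sup_zpowers_ne_top hMna hNM hm htop

theorem le_of_normal_of_centerOf_le_of_ne (hM : IsCoatom M) [M.Normal]
    (hMna : ∃ a ∈ M, ∃ b ∈ M, a * b ≠ b * a) (hK : IsCoatom K)
    (hKM : K ⊓ M = centerOf M)
    [N.Normal] (hZN : centerOf M ≤ N) (hNZ : N ≠ centerOf M) : M ≤ N := by
  have := centerOf_normal_s14 (M := M)
  rcases eq_centerOf_or_eq_of_normal hK hKM (N := N ⊓ M) (le_inf hZN centerOf_le) inf_le_right
    with hNM | hNM
  · have hNK := le_of_normal_of_inf_eq_centerOf hM hMna hK hKM hNM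
    exact (hNZ (le_antisymm (le_centerOf_of_normal_of_le hM hMna hK hKM hNK) hZN)).elim
  · exact inf_eq_right.1 hNM

/-- STATEMENT 14 (Proposition 4.6(i) / `prop:gkzmprim`), phrased in the ambient
group via the correspondence between subgroups of `G/Z(M)` and subgroups of `G`
containing `Z(M)`. -/
theorem statement_14 {M K : Subgroup G} (hM : IsCoatom M) (hMn : M.Normal)
    (hMna : ∃ a ∈ M, ∃ b ∈ M, a * b ≠ b * a)
    (hK : IsCoatom K) (hKM : K ⊓ M = centerOf M) :
    centerOf M ≤ K ∧
      (∀ N : Subgroup G, N.Normal → N ≤ K → N ≤ centerOf M) ∧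
      centerOf M < M ∧
      (∀ N : Subgroup G, N.Normal → centerOf M ≤ N → N ≠ centerOf M → M ≤ N) ∧
      M ⊔ K = ⊤ ∧
      ∃ p : ℕ, p.Prime ∧ (centerOf M).relIndex K = p := by
  have hsup : M ⊔ K = ⊤ :=
    (hM.not_le_iff_codisjoint.1 (not_le_of_inf_eq_centerOf hM hMna hK hKM)).eq_top
  refine ⟨hKM ▸ inf_le_left, fun N hNn hNK => ?_, centerOf_lt hMna, fun N hNn hZN hNZ => ?_,
    hsup, M.index, index_prime_of_isCoatom hM, relIndex_centerOf_eq_index hsup hKM⟩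
  · exact le_centerOf_of_normal_of_le hM hMna hK hKM hNK
  · exact le_of_normal_of_centerOf_le_of_ne hM hMna hK hKM hZN hNZ

end NC
end
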